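/- arXiv:2402.02458 — 4 statements merged into one kernel-verified Lean document; each statement's English description precedes it below -/
import Mathlib

section
/- Let n be a positive integer and let P_n denote the path graph on n vertices. Then the number m(P_n) of maximum dissociation sets of P_n equals (n+3)(n+6)/18 if n ≡ 0 (mod 3), equals (n+2)/3 if n ≡ 1 (mod 3), and equals 1 if n ≡ 2 (mod 3). -/
open scoped Classical

variable {V : Type*}

/-- The number of neighbors of `v` that lie inside the finite set `s`,
i.e. the degree of `v` in the subgraph induced by `s` (when `v ∈ s`). -/
noncomputable def nbrCount (G : SimpleGraph V) (s : Finset V) (v : V) : ℕ :=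
  {w ∈ (s : Set V) | G.Adj v w}.ncard

/-- `s` is a dissociation set of `G`: the subgraph induced by `s` has maximum degree at most 1. -/
def IsDissoc (G : SimpleGraph V) (s : Finset V) : Prop :=
  ∀ v ∈ s, nbrCount G s v ≤ 1

/-- The dissociation number of the subgraph of `G` induced by `A`. -/
noncomputable def dissNumOn (G : SimpleGraph V) (A : Set V) : ℕ :=
  sSup {n | ∃ s : Finset V, ↑s ⊆ A ∧ IsDissoc G s ∧ s.card = n}

/-- `s` is a maximum dissociation set of the subgraph of `G` induced by `A`. -/
def IsMaxDissocOn (G : SimpleGraph V) (A : Set V) (s : Finset V) : Prop :=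
  ↑s ⊆ A ∧ IsDissoc G s ∧ s.card = dissNumOn G A

/-- The number of maximum dissociation sets of the subgraph of `G` induced by `A`. -/
noncomputable def numMaxDissocOn (G : SimpleGraph V) (A : Set V) : ℕ :=
  Nat.card {s : Finset V // IsMaxDissocOn G A s}

/-- The dissociation number of `G`. -/
noncomputable def dissNum (G : SimpleGraph V) : ℕ :=
  dissNumOn G Set.univ

/-- `s` is a maximum dissociation set of `G`. -/
def IsMaxDissoc (G : SimpleGraph V) (s : Finset V) : Prop :=
  IsMaxDissocOn G Set.univ s

/-- The number `m(G)` of maximum dissociation sets of `G`. -/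
noncomputable def numMaxDissoc (G : SimpleGraph V) : ℕ :=
  numMaxDissocOn G Set.univ

/-- `m(G[A], u⁻)`: maximum dissociation sets of `G[A]` not containing `u`. -/
noncomputable def numMaxDissocOnAway (G : SimpleGraph V) (A : Set V) (u : V) : ℕ :=
  Nat.card {s : Finset V // IsMaxDissocOn G A s ∧ u ∉ s}

/-- `m(G[A], u⁰)`: maximum dissociation sets of `G[A]` containing `u` with induced degree 0. -/
noncomputable def numMaxDissocOnDeg0 (G : SimpleGraph V) (A : Set V) (u : V) : ℕ :=
  Nat.card {s : Finset V // IsMaxDissocOn G A s ∧ u ∈ s ∧ nbrCount G s u = 0}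

/-- `m(G[A], u¹)`: maximum dissociation sets of `G[A]` containing `u` with induced degree 1. -/
noncomputable def numMaxDissocOnDeg1 (G : SimpleGraph V) (A : Set V) (u : V) : ℕ :=
  Nat.card {s : Finset V // IsMaxDissocOn G A s ∧ u ∈ s ∧ nbrCount G s u = 1}

/-- `m(G, u⁻)`. -/
noncomputable def numMaxDissocAway (G : SimpleGraph V) (u : V) : ℕ :=
  numMaxDissocOnAway G Set.univ u

/-- `m(G, u⁰)`. -/
noncomputable def numMaxDissocDeg0 (G : SimpleGraph V) (u : V) : ℕ :=
  numMaxDissocOnDeg0 G Set.univ u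

/-- `m(G, u¹)`. -/
noncomputable def numMaxDissocDeg1 (G : SimpleGraph V) (u : V) : ℕ :=
  numMaxDissocOnDeg1 G Set.univ u

/-- `m̄`: relative count, `numMaxDissocOn G B` if `dissNumOn G B = dissNumOn G A`, else 0. -/
noncomputable def mbar (G : SimpleGraph V) (A B : Set V) : ℕ :=
  if dissNumOn G B = dissNumOn G A then numMaxDissocOn G B else 0

/-- `G` is a potted graph whose (unique) cycle has length `k`: `G` is connected and unicyclic
(equivalently, connected with as many edges as vertices), and its cycle has length `k` and
contains a unique vertex of degree larger than 2. -/
def IsPotted (G : SimpleGraph V) (k : ℕ) : Prop :=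
  G.Connected ∧ G.edgeSet.ncard = Nat.card V ∧
    ∃ (v : V) (c : G.Walk v v), c.IsCycle ∧ c.length = k ∧
      ∃! u, u ∈ c.support ∧ 2 < (G.neighborSet u).ncard

namespace PathDissoc

def ok : List Bool → Bool
  | true :: true :: true :: _ => false
  | _ :: l => ok l
  | [] => true

@[simp] lemma ok_nil : ok [] = true := rfl
@[simp] lemma ok_singleton (a : Bool) : ok [a] = true := by cases a <;> rfl
@[simp] lemma ok_pair (a b : Bool) : ok [a, b] = true := by cases a <;> cases b <;> rfl
@[simp] lemma ok_cons_false (m : List Bool) : ok (false :: m) = ok m := by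
  cases m with
  | nil => rfl
  | cons b m' => cases m' with
    | nil => rfl
    | cons c r => rfl
@[simp] lemma ok_cons_true_false (m : List Bool) : ok (true :: false :: m) = ok m := by
  cases m with
  | nil => rfl
  | cons c r => rfl
@[simp] lemma ok_TTF (m : List Bool) : ok (true :: true :: false :: m) = ok m := rfl
@[simp] lemma ok_TTT (m : List Bool) : ok (true :: true :: true :: m) = false := rfl

lemma ok_tail {a : Bool} {l : List Bool} (h : ok (a :: l) = true) : ok l = true := by
  cases l with
  | nil => rfl
  | cons b m => cases m with
    | nil => simp
    | cons c r =>
      cases a <;> cases b <;> cases c <;> simp_all [ok]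

/-- triple of consecutive `true`s starting at `i`. -/
def Ptriple (l : List Bool) (i : ℕ) : Prop :=
  l.getD i false = true ∧ l.getD (i+1) false = true ∧ l.getD (i+2) false = true

lemma Ptriple_cons_succ (a : Bool) (l : List Bool) (i : ℕ) :
    Ptriple (a :: l) (i + 1) ↔ Ptriple l i := by
  simp [Ptriple, List.getD_cons_succ]

lemma ok_iff (l : List Bool) : ok l = true ↔ ∀ i, ¬ Ptriple l i := by
  induction l with
  | nil => simp [Ptriple]
  | cons a t ih =>
    have shift : (∀ i, ¬ Ptriple (a :: t) i) ↔ (¬ Ptriple (a :: t) 0 ∧ ∀ i, ¬ Ptriple t i) := by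
      constructor
      · exact fun h => ⟨h 0, fun i => (Ptriple_cons_succ a t i).not.mp (h (i+1))⟩
      · rintro ⟨h0, h⟩ i
        cases i with
        | zero => exact h0
        | succ j => exact (Ptriple_cons_succ a t j).not.mpr (h j)
    rw [shift, ← ih]
    cases t with
    | nil => simp [Ptriple]
    | cons b u =>
      cases u with
      | nil => simp [Ptriple]
      | cons c r =>
        have h0 : Ptriple (a :: b :: c :: r) 0 ↔ (a = true ∧ b = true ∧ c = true) := by
          simp [Ptriple]
        rw [h0]
        cases a <;> cases b <;> cases c <;> simp [ok]

theorem len_le (l : List Bool) (h : ok l = true) : l.length ≤ 3 * l.count false + 2 := by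
  match l with
  | [] => simp
  | [a] => simp
  | [a, b] => simp
  | a :: b :: c :: r =>
    match a with
    | false =>
      have := len_le (b :: c :: r) (ok_tail h)
      simp [List.count_cons] at this ⊢
      omega
    | true =>
      match b with
      | false =>
        have := len_le (c :: r) (ok_tail (ok_tail h))
        simp [List.count_cons] at this ⊢
        omega
      | true =>
        match c with
        | true => simp at h
        | false =>
          have := len_le r (ok_tail (ok_tail (ok_tail h)))
          simp [List.count_cons] at this ⊢
          omega
termination_by l.length

def maxl : ℕ → List Bool
  | 0 => []
  | 1 => [true]
  | 2 => [true, true]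
  | n + 3 => true :: true :: false :: maxl n

@[simp] lemma maxl_length (n : ℕ) : (maxl n).length = n := by
  induction n using maxl.induct <;> simp [maxl, *]

@[simp] lemma maxl_count_false (n : ℕ) : (maxl n).count false = n / 3 := by
  induction n using maxl.induct <;> simp [maxl, List.count_cons, *] <;> omega

@[simp] lemma maxl_ok (n : ℕ) : ok (maxl n) = true := by
  induction n using maxl.induct <;> simp [maxl, *]

lemma count_true_add_count_false (l : List Bool) : l.count true + l.count false = l.length := by
  induction l with
  | nil => simp
  | cons a t ih => cases a <;> simp [List.count_cons, *] <;> omega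


def strs : ℕ → Finset (List Bool)
  | 0 => {[]}
  | n + 1 => (strs n).biUnion fun l => {true :: l, false :: l}

lemma mem_strs {n : ℕ} {l : List Bool} : l ∈ strs n ↔ l.length = n := by
  induction n generalizing l with
  | zero => simp [strs, List.length_eq_zero_iff]
  | succ n ih =>
    simp only [strs, Finset.mem_biUnion, Finset.mem_insert, Finset.mem_singleton]
    constructor
    · rintro ⟨m, hm, rfl | rfl⟩ <;> simp [ih.mp hm]
    · intro hl
      cases l with
      | nil => simp at hl
      | cons a t =>
        refine ⟨t, ih.mpr (by simpa using hl), ?_⟩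
        cases a <;> simp

def C (n d : ℕ) : ℕ :=
  ((strs n).filter (fun l => ok l = true ∧ l.count false = d)).card

lemma C_eq_zero {n d : ℕ} (h : 3 * d + 2 < n) : C n d = 0 := by
  rw [C, Finset.card_eq_zero, Finset.filter_eq_empty_iff]
  rintro l hl ⟨hok, hcf⟩
  have := len_le l hok
  rw [mem_strs] at hl
  omega

lemma C_zero : C 0 0 = 1 := by decide

lemma C_one : C 1 0 = 1 := by decide

lemma C_two : C 2 0 = 1 := by decide

lemma C_rec (n d : ℕ) : C (n + 3) (d + 1) = C (n + 2) d + C (n + 1) d + C n d := by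
  classical
  have P : ℕ → List Bool → Prop := fun d l => ok l = true ∧ l.count false = d
  set A := ((strs (n+2)).filter (fun l => ok l = true ∧ l.count false = d)).image
    (fun l => false :: l) with hA
  set B := ((strs (n+1)).filter (fun l => ok l = true ∧ l.count false = d)).image
    (fun l => true :: false :: l) with hB
  set D := ((strs n).filter (fun l => ok l = true ∧ l.count false = d)).image
    (fun l => true :: true :: false :: l) with hD
  have key : ((strs (n+3)).filter (fun l => ok l = true ∧ l.count false = (d+1))) = A ∪ B ∪ D := by
    ext l
    simp only [Finset.mem_union, hA, hB, hD, Finset.mem_image, Finset.mem_filter, mem_strs]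
    constructor
    · rintro ⟨hlen, hok, hcf⟩
      match l with
      | false :: m =>
        refine Or.inl (Or.inl ⟨m, ⟨by simpa using hlen, ?_, ?_⟩, rfl⟩)
        · rwa [ok_cons_false] at hok
        · simp [List.count_cons] at hcf; omega
      | true :: false :: m =>
        refine Or.inl (Or.inr ⟨m, ⟨by simpa using hlen, ?_, ?_⟩, rfl⟩)
        · rwa [ok_cons_true_false] at hok
        · simp [List.count_cons] at hcf; omega
      | true :: true :: false :: m =>
        refine Or.inr ⟨m, ⟨by simpa using hlen, ?_, ?_⟩, rfl⟩
        · rwa [ok_TTF] at hok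
        · simp [List.count_cons] at hcf; omega
      | true :: true :: true :: m => simp [ok] at hok
    · rintro ((⟨m, ⟨hlen, hok, hcf⟩, rfl⟩ | ⟨m, ⟨hlen, hok, hcf⟩, rfl⟩) | ⟨m, ⟨hlen, hok, hcf⟩, rfl⟩) <;>
        simp [ok_cons_false, ok_cons_true_false, ok_TTF, hok, List.count_cons, hcf, hlen]
  rw [C, key]
  have dAB : Disjoint A B := by
    rw [Finset.disjoint_left]
    rintro l hl hl'
    simp only [hA, hB, Finset.mem_image] at hl hl'
    obtain ⟨m, _, rfl⟩ := hl
    obtain ⟨m', _, h⟩ := hl'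
    simp at h
  have dABD : Disjoint (A ∪ B) D := by
    rw [Finset.disjoint_left]
    rintro l hl hl'
    simp only [hA, hB, hD, Finset.mem_union, Finset.mem_image] at hl hl'
    obtain ⟨m', _, h⟩ := hl'
    rcases hl with ⟨m, _, rfl⟩ | ⟨m, _, rfl⟩
    · simp at h
    · simp at h
  rw [Finset.card_union_of_disjoint dABD, Finset.card_union_of_disjoint dAB]
  rw [hA, hB, hD, Finset.card_image_of_injective _ (by intro x y h; simpa using h),
    Finset.card_image_of_injective _ (by intro x y h; simpa using h),
    Finset.card_image_of_injective _ (by intro x y h; simpa using h)]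
  rfl


lemma C_main (t : ℕ) :
    C (3 * t) t = (t + 1) * (t + 2) / 2 ∧ C (3 * t + 1) t = t + 1 ∧ C (3 * t + 2) t = 1 := by
  induction t with
  | zero => simpa using ⟨C_zero, C_one, C_two⟩
  | succ t ih =>
    obtain ⟨h0, h1, h2⟩ := ih
    have e0 : C (3 * (t + 1)) (t + 1) = C (3 * t + 2) t + C (3 * t + 1) t + C (3 * t) t := by
      have : 3 * (t + 1) = 3 * t + 3 := by ring
      rw [this, C_rec]
    have e1 : C (3 * (t + 1) + 1) (t + 1) = C (3 * t + 3) t + C (3 * t + 2) t + C (3 * t + 1) t := by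
      have : 3 * (t + 1) + 1 = (3 * t + 1) + 3 := by ring
      rw [this, C_rec]
    have e2 : C (3 * (t + 1) + 2) (t + 1) = C (3 * t + 4) t + C (3 * t + 3) t + C (3 * t + 2) t := by
      have : 3 * (t + 1) + 2 = (3 * t + 2) + 3 := by ring
      rw [this, C_rec]
    have z3 : C (3 * t + 3) t = 0 := C_eq_zero (by omega)
    have z4 : C (3 * t + 4) t = 0 := C_eq_zero (by omega)
    refine ⟨?_, ?_, ?_⟩
    · rw [e0, h0, h1, h2]
      have e : (t + 1 + 1) * (t + 1 + 2) = (t + 1) * (t + 2) + 2 * (t + 2) := by ring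
      rw [e]
      have hd : 2 ∣ (t + 1) * (t + 2) := (Nat.even_mul_succ_self (t+1)).two_dvd
      generalize (t + 1) * (t + 2) = a at *
      omega
    · rw [e1, h1, h2, z3]; omega
    · rw [e2, h2, z3, z4]

variable {n : ℕ}

/-- encode a finset of `Fin n` as a Boolean list of length `n`. -/
noncomputable def enc (s : Finset (Fin n)) : List Bool :=
  List.ofFn fun i => decide (i ∈ s)

@[simp] lemma enc_length (s : Finset (Fin n)) : (enc s).length = n := List.length_ofFn

lemma enc_getD (s : Finset (Fin n)) (i : ℕ) :
    (enc s).getD i false = if h : i < n then decide ((⟨i, h⟩ : Fin n) ∈ s) else false := by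
  rw [enc, List.getD_eq_getElem?_getD, List.getElem?_ofFn]
  split <;> rfl

lemma enc_getD_iff (s : Finset (Fin n)) (i : ℕ) :
    (enc s).getD i false = true ↔ ∃ h : i < n, (⟨i, h⟩ : Fin n) ∈ s := by
  rw [enc_getD]
  split <;> simp_all

lemma count_true_ofFn : ∀ {m : ℕ} (f : Fin m → Bool),
    (List.ofFn f).count true = (Finset.univ.filter fun i => f i = true).card := by
  intro m
  induction m with
  | zero => simp
  | succ m ih =>
    intro f
    rw [List.ofFn_succ, List.count_cons, ih fun i => f i.succ]
    rw [Finset.card_filter, Finset.card_filter, Fin.sum_univ_succ]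
    cases h : f 0 <;> simp [h] <;> omega

lemma card_eq_count (s : Finset (Fin n)) : s.card = (enc s).count true := by
  rw [enc, count_true_ofFn]
  congr 1
  ext i
  simp


lemma nbrCount_eq (G : SimpleGraph V) (s : Finset V) (v : V) :
    nbrCount G s v = (s.filter (fun w => G.Adj v w)).card := by
  rw [nbrCount]
  rw [show {w ∈ (s : Set V) | G.Adj v w} = ↑(s.filter (fun w => G.Adj v w)) by
    ext w; simp]
  exact Set.ncard_coe_finset _

lemma isDissoc_iff_noTriple (s : Finset (Fin n)) :
    IsDissoc (SimpleGraph.pathGraph n) s ↔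
      ∀ i : ℕ, ∀ h : i + 2 < n,
        ¬((⟨i, by omega⟩ : Fin n) ∈ s ∧ (⟨i+1, by omega⟩ : Fin n) ∈ s ∧ (⟨i+2, h⟩ : Fin n) ∈ s) := by
  constructor
  · intro hd i h ⟨m0, m1, m2⟩
    have hv := hd ⟨i+1, by omega⟩ m1
    rw [nbrCount_eq] at hv
    rw [Finset.card_le_one] at hv
    have h0 : (⟨i, by omega⟩ : Fin n) ∈ s.filter (fun w => (SimpleGraph.pathGraph n).Adj ⟨i+1, by omega⟩ w) := by
      rw [Finset.mem_filter]
      exact ⟨m0, by rw [SimpleGraph.pathGraph_adj]; right; rfl⟩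
    have h2 : (⟨i+2, h⟩ : Fin n) ∈ s.filter (fun w => (SimpleGraph.pathGraph n).Adj ⟨i+1, by omega⟩ w) := by
      rw [Finset.mem_filter]
      exact ⟨m2, by rw [SimpleGraph.pathGraph_adj]; left; rfl⟩
    have := hv _ h0 _ h2
    simp only [Fin.mk.injEq] at this
    omega
  · intro hnt v hv
    rw [nbrCount_eq]
    by_contra hc
    rw [not_le, Finset.one_lt_card] at hc
    obtain ⟨a, ha, b, hb, hab⟩ := hc
    rw [Finset.mem_filter] at ha hb
    rw [SimpleGraph.pathGraph_adj] at ha hb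
    have hvals : a.val ≠ b.val := fun h => hab (Fin.ext h)
    have hia := a.isLt
    have hib := b.isLt
    have hbd : 1 ≤ v.val ∧ v.val + 1 < n := by
      rcases ha.2 with h1 | h1 <;> rcases hb.2 with h2 | h2 <;> omega
    have hcase : (a.val = v.val - 1 ∧ b.val = v.val + 1) ∨
        (a.val = v.val + 1 ∧ b.val = v.val - 1) := by
      rcases ha.2 with h1 | h1 <;> rcases hb.2 with h2 | h2 <;> omega
    apply hnt (v.val - 1) (by omega)
    have hvv : (⟨v.val - 1 + 1, by omega⟩ : Fin n) = v :=
      Fin.ext (by simp only [Fin.val_mk]; omega)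
    have hm1 : (⟨v.val - 1, by omega⟩ : Fin n) ∈ s := by
      rcases hcase with ⟨h, _⟩ | ⟨_, h⟩
      · exact (Fin.ext (by simp only [Fin.val_mk]; omega) :
          (⟨v.val - 1, by omega⟩ : Fin n) = a) ▸ ha.1
      · exact (Fin.ext (by simp only [Fin.val_mk]; omega) :
          (⟨v.val - 1, by omega⟩ : Fin n) = b) ▸ hb.1
    have hm2 : (⟨v.val - 1 + 2, by omega⟩ : Fin n) ∈ s := by
      rcases hcase with ⟨_, h⟩ | ⟨h, _⟩
      · exact (Fin.ext (by simp only [Fin.val_mk]; omega) :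
          (⟨v.val - 1 + 2, by omega⟩ : Fin n) = b) ▸ hb.1
      · exact (Fin.ext (by simp only [Fin.val_mk]; omega) :
          (⟨v.val - 1 + 2, by omega⟩ : Fin n) = a) ▸ ha.1
    have hmv : (⟨v.val - 1 + 1, by omega⟩ : Fin n) ∈ s := by rwa [hvv]
    exact ⟨hm1, hmv, hm2⟩

lemma isDissoc_iff_ok (s : Finset (Fin n)) :
    IsDissoc (SimpleGraph.pathGraph n) s ↔ ok (enc s) = true := by
  rw [ok_iff, isDissoc_iff_noTriple]
  constructor
  · intro h i ⟨t0, t1, t2⟩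
    rw [enc_getD_iff] at t0 t1 t2
    obtain ⟨h2, m2⟩ := t2
    exact h i h2 ⟨t0.choose_spec, t1.choose_spec, m2⟩
  · intro h i hi2 ⟨m0, m1, m2⟩
    exact h i ⟨(enc_getD_iff s i).mpr ⟨by omega, m0⟩, (enc_getD_iff s (i+1)).mpr ⟨by omega, m1⟩,
      (enc_getD_iff s (i+2)).mpr ⟨hi2, m2⟩⟩


noncomputable def decode (l : List Bool) : Finset (Fin n) :=
  Finset.univ.filter (fun i => l.getD i.val false = true)

lemma enc_decode {l : List Bool} (hl : l.length = n) : enc (decode (n := n) l) = l := by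
  apply List.ext_get (by simp [hl])
  intro i h1 h2
  simp only [enc]
  rw [List.get_ofFn]
  simp only [Fin.cast, decode, Finset.mem_filter, Finset.mem_univ, true_and]
  rw [List.get_eq_getElem, ← List.getD_eq_getElem l false h2]
  simp only [enc_length] at h1
  simp

lemma card_le_of_isDissoc {s : Finset (Fin n)} (h : IsDissoc (SimpleGraph.pathGraph n) s) :
    s.card ≤ n - n / 3 := by
  have hok := (isDissoc_iff_ok s).mp h
  have h1 := len_le (enc s) hok
  have h2 := count_true_add_count_false (enc s)
  have h3 := card_eq_count s
  rw [enc_length] at h1 h2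
  omega

lemma dissNumOn_univ : dissNumOn (SimpleGraph.pathGraph n) Set.univ = n - n / 3 := by
  have hsm : IsMaxDissocOn (SimpleGraph.pathGraph n) Set.univ (decode (n := n) (maxl n)) →
      True := fun _ => trivial
  have hd : IsDissoc (SimpleGraph.pathGraph n) (decode (n := n) (maxl n)) := by
    rw [isDissoc_iff_ok, enc_decode (maxl_length n), maxl_ok]
  have hcard : (decode (n := n) (maxl n)).card = n - n / 3 := by
    have := count_true_add_count_false (maxl n)
    rw [maxl_length, maxl_count_false] at this
    rw [card_eq_count, enc_decode (maxl_length n)]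
    omega
  have hub : ∀ m ∈ {m | ∃ s : Finset (Fin n), ↑s ⊆ (Set.univ : Set (Fin n)) ∧
      IsDissoc (SimpleGraph.pathGraph n) s ∧ s.card = m}, m ≤ n - n / 3 := by
    rintro m ⟨s, -, hd', rfl⟩
    exact card_le_of_isDissoc hd'
  apply le_antisymm
  · exact csSup_le ⟨_, ⟨decode (maxl n), by simp, hd, rfl⟩⟩ hub
  · exact le_csSup ⟨n - n / 3, hub⟩ ⟨decode (maxl n), by simp, hd, hcard⟩

lemma numMaxDissoc_eq_C : numMaxDissoc (SimpleGraph.pathGraph n) = C n (n / 3) := by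
  classical
  rw [numMaxDissoc, numMaxDissocOn, Nat.card_eq_fintype_card, Fintype.card_subtype, C]
  apply Finset.card_bij (fun s _ => enc s)
  · intro s hs
    rw [Finset.mem_filter] at hs ⊢
    obtain ⟨-, -, hd, hcard⟩ := hs
    rw [dissNumOn_univ] at hcard
    have h2 := count_true_add_count_false (enc s)
    have h3 := card_eq_count s
    rw [enc_length] at h2
    refine ⟨mem_strs.mpr (enc_length s), (isDissoc_iff_ok s).mp hd, ?_⟩
    have : n / 3 ≤ n := Nat.div_le_self n 3
    omega
  · intro s1 h1 s2 h2 he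
    have hmem : ∀ (s : Finset (Fin n)) (i : Fin n),
        i ∈ s ↔ (enc s).getD i.val false = true := by
      intro s i
      rw [enc_getD_iff]
      constructor
      · intro h
        exact ⟨i.isLt, by simpa using h⟩
      · rintro ⟨h, hm⟩
        simpa using hm
    ext i
    have hgd := congrArg (fun l => l.getD i.val false) he
    rw [hmem s1 i, hgd, ← hmem s2 i]
  · intro l hl
    rw [Finset.mem_filter, mem_strs] at hl
    obtain ⟨hlen, hok, hcf⟩ := hl
    refine ⟨decode l, ?_, enc_decode hlen⟩
    rw [Finset.mem_filter]
    refine ⟨Finset.mem_univ _, by simp, ?_, ?_⟩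
    · rw [isDissoc_iff_ok, enc_decode hlen, hok]
    · rw [dissNumOn_univ, card_eq_count, enc_decode hlen]
      have := count_true_add_count_false l
      rw [hlen] at this
      have : n / 3 ≤ n := Nat.div_le_self n 3
      omega


end PathDissoc

open PathDissoc in
theorem numMaxDissoc_pathGraph (n : ℕ) (hn : 1 ≤ n) :
    (n % 3 = 0 → numMaxDissoc (SimpleGraph.pathGraph n) = (n + 3) * (n + 6) / 18) ∧
    (n % 3 = 1 → numMaxDissoc (SimpleGraph.pathGraph n) = (n + 2) / 3) ∧
    (n % 3 = 2 → numMaxDissoc (SimpleGraph.pathGraph n) = 1) := by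
  have hC := numMaxDissoc_eq_C (n := n)
  refine ⟨?_, ?_, ?_⟩ <;> intro hr
  · obtain ⟨t, rfl⟩ : ∃ t, n = 3 * t := ⟨n / 3, by omega⟩
    rw [hC, show 3 * t / 3 = t by omega, (C_main t).1]
    have h9 : (3 * t + 3) * (3 * t + 6) = 9 * ((t + 1) * (t + 2)) := by ring
    rw [h9, show (18 : ℕ) = 9 * 2 from rfl, Nat.mul_div_mul_left _ _ (by norm_num)]
  · obtain ⟨t, rfl⟩ : ∃ t, n = 3 * t + 1 := ⟨n / 3, by omega⟩
    rw [hC, show (3 * t + 1) / 3 = t by omega, (C_main t).2.1]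
    omega
  · obtain ⟨t, rfl⟩ : ∃ t, n = 3 * t + 2 := ⟨n / 3, by omega⟩
    rw [hC, show (3 * t + 2) / 3 = t by omega, (C_main t).2.2]
end

section
/- Let n ≥ 3 be an integer and let C_n denote the cycle graph on n vertices. Then the number m(C_n) of maximum dissociation sets of C_n equals 3 if n ≡ 0 (mod 3), equals n(n+5)/6 if n ≡ 1 (mod 3), and equals n if n ≡ 2 (mod 3). -/
open scoped Classical

variable {V : Type*}

namespace CycP
open Finset
open Fin.CommRing

variable {n : ℕ}

section FinFacts
variable [NeZero n]

lemma add_cast_val (x : Fin n) (a : ℕ) : (x + (a : Fin n)).val = (x.val + a) % n := by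
  simp [Fin.add_def, Nat.add_mod_mod]

lemma cast_inj' {a b : ℕ} (ha : a < n) (hb : b < n) : (a : Fin n) = (b : Fin n) ↔ a = b := by
  rw [Fin.ext_iff, Fin.val_natCast, Fin.val_natCast, Nat.mod_eq_of_lt ha, Nat.mod_eq_of_lt hb]

/-- covering predicate: every window of 3 consecutive vertices meets `T`. -/
def Cov (T : Finset (Fin n)) : Prop := ∀ x : Fin n, x ∈ T ∨ x + 1 ∈ T ∨ x + 2 ∈ T

/-- shifted offset set -/
noncomputable def ofOffs (a : Fin n) (O : Finset ℕ) : Finset (Fin n) := O.image (fun o : ℕ => a + (o : Fin n))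

lemma mem_ofOffs {a : Fin n} {O : Finset ℕ} (hO : O ⊆ range n) (x : Fin n) :
    x ∈ ofOffs a O ↔ (x - a).val ∈ O := by
  simp only [ofOffs, mem_image]
  constructor
  · rintro ⟨o, ho, rfl⟩
    have hlt : o < n := mem_range.mp (hO ho)
    have : a + (o : Fin n) - a = (o : Fin n) := by ring
    rw [this, Fin.val_natCast, Nat.mod_eq_of_lt hlt]
    exact ho
  · intro hx
    refine ⟨(x - a).val, hx, ?_⟩
    rw [Fin.cast_val_eq_self]
    ring

lemma card_ofOffs {a : Fin n} {O : Finset ℕ} (hO : O ⊆ range n) :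
    (ofOffs a O).card = O.card := by
  rw [ofOffs, card_image_of_injOn]
  intro o ho o' ho' h
  have h' : (o : Fin n) = (o' : Fin n) := by
    have := add_left_cancel h
    exact this
  exact (cast_inj' (mem_range.mp (hO ho)) (mem_range.mp (hO ho'))).mp h'

lemma cov_ofOffs {a : Fin n} {O : Finset ℕ} (hO : O ⊆ range n)
    (h : ∀ v < n, v ∈ O ∨ (v + 1) % n ∈ O ∨ (v + 2) % n ∈ O) : Cov (ofOffs a O) := by
  intro x
  have h1 : x + 1 - a = (x - a) + (1 : ℕ) := by push_cast; ring
  have h2 : x + 2 - a = (x - a) + (2 : ℕ) := by push_cast; ring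
  rw [mem_ofOffs hO, mem_ofOffs hO, mem_ofOffs hO, h1, h2, add_cast_val, add_cast_val]
  exact h (x - a).val (x - a).isLt

end FinFacts

section Graph
variable [NeZero n]

lemma val_one3 (hn : 3 ≤ n) : (1 : Fin n).val = 1 := by
  rw [← Nat.cast_one, Fin.val_natCast, Nat.mod_eq_of_lt (by omega)]

lemma val_two3 (hn : 3 ≤ n) : (2 : Fin n).val = 2 := by
  rw [← Nat.cast_ofNat, Fin.val_natCast, Nat.mod_eq_of_lt (by omega)]

lemma one_ne_zero3 (hn : 3 ≤ n) : (1 : Fin n) ≠ 0 := by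
  intro h; have := congrArg Fin.val h; rw [val_one3 hn, Fin.val_zero] at this; omega

lemma two_ne_zero3 (hn : 3 ≤ n) : (2 : Fin n) ≠ 0 := by
  intro h; have := congrArg Fin.val h; rw [val_two3 hn, Fin.val_zero] at this; omega

lemma one_ne_two3 (hn : 3 ≤ n) : (1 : Fin n) ≠ 2 := by
  intro h; have := congrArg Fin.val h; rw [val_one3 hn, val_two3 hn] at this; omega

lemma sub_one_ne_add_one (hn : 3 ≤ n) (v : Fin n) : v - 1 ≠ v + 1 := by
  intro h
  have h0 : (0 : Fin n) = 2 := by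
    calc (0 : Fin n) = v + 1 - (v + 1) := by ring
      _ = v + 1 - (v - 1) := by rw [h]
      _ = 2 := by ring
  exact two_ne_zero3 hn h0.symm

lemma adj_iff (hn : 3 ≤ n) (v w : Fin n) :
    (SimpleGraph.cycleGraph n).Adj v w ↔ w = v - 1 ∨ w = v + 1 := by
  rw [SimpleGraph.cycleGraph_adj']
  have h1 : ∀ a b : Fin n, (a - b).val = 1 ↔ a - b = 1 := by
    intro a b; rw [Fin.ext_iff, val_one3 hn]
  constructor
  · rintro (h | h)
    · left; rw [h1] at h; rw [← h]; ring
    · right; rw [h1] at h; rw [← h]; ring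
  · rintro (rfl | rfl)
    · left; rw [h1]; ring
    · right; rw [h1]; ring

lemma nbrCount_le_one_iff (hn : 3 ≤ n) (s : Finset (Fin n)) (v : Fin n) :
    nbrCount (SimpleGraph.cycleGraph n) s v ≤ 1 ↔ ¬(v - 1 ∈ s ∧ v + 1 ∈ s) := by
  classical
  have hset : {w ∈ (s : Set (Fin n)) | (SimpleGraph.cycleGraph n).Adj v w}
      = ↑(s.filter (fun w => w = v - 1 ∨ w = v + 1)) := by
    ext w; simp [adj_iff hn]
  rw [nbrCount, hset, Set.ncard_coe_finset]
  have hfil : s.filter (fun w => w = v - 1 ∨ w = v + 1)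
      = (s.filter (· = v - 1)) ∪ (s.filter (· = v + 1)) := by
    rw [← filter_or]
  rw [hfil]
  by_cases h1 : v - 1 ∈ s <;> by_cases h2 : v + 1 ∈ s <;>
    simp [filter_eq', h1, h2, sub_one_ne_add_one hn v, ← insert_eq,
      Finset.card_pair (sub_one_ne_add_one hn v)]

lemma isDissoc_iff_cov (hn : 3 ≤ n) (s : Finset (Fin n)) :
    IsDissoc (SimpleGraph.cycleGraph n) s ↔ Cov sᶜ := by
  constructor
  · intro h x
    by_cases hx : x ∈ s
    · by_cases hx1 : x + 1 ∈ s
      · by_cases hx2 : x + 2 ∈ s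
        · exfalso
          have := (nbrCount_le_one_iff hn s (x + 1)).mp (h _ hx1)
          apply this
          constructor
          · have e : x + 1 - 1 = x := by ring
            rw [e]; exact hx
          · have e : x + 1 + 1 = x + 2 := by ring
            rw [e]; exact hx2
        · exact Or.inr (Or.inr (mem_compl.mpr hx2))
      · exact Or.inr (Or.inl (mem_compl.mpr hx1))
    · exact Or.inl (mem_compl.mpr hx)
  · intro h v hv
    rw [nbrCount_le_one_iff hn]
    rintro ⟨hA, hB⟩
    rcases h (v - 1) with hc | hc | hc
    · exact (mem_compl.mp hc) hA
    · have e : v - 1 + 1 = v := by ring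
      rw [e] at hc; exact (mem_compl.mp hc) hv
    · have e : v - 1 + 2 = v + 1 := by ring
      rw [e] at hc; exact (mem_compl.mp hc) hB

lemma cov_le_card (hn : 3 ≤ n) {T : Finset (Fin n)} (hT : Cov T) : n ≤ 3 * T.card := by
  classical
  have hex : ∀ x : Fin n, ∃ t, t ∈ T ∧ (t = x ∨ t = x + 1 ∨ t = x + 2) := by
    intro x
    rcases hT x with h | h | h
    exacts [⟨x, h, Or.inl rfl⟩, ⟨x + 1, h, Or.inr (Or.inl rfl)⟩, ⟨x + 2, h, Or.inr (Or.inr rfl)⟩]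
  choose f hf1 hf2 using hex
  have himg : (univ : Finset (Fin n)).image f ⊆ T := by
    intro b hb; rcases mem_image.mp hb with ⟨x, -, rfl⟩; exact hf1 x
  calc n = (univ : Finset (Fin n)).card := by simp
    _ ≤ 3 * ((univ : Finset (Fin n)).image f).card := by
        apply card_le_mul_card_image
        intro b _
        have hsub : ({x ∈ univ | f x = b} : Finset (Fin n)) ⊆ {b, b - 1, b - 2} := by
          intro x hx
          have hfx : f x = b := (mem_filter.mp hx).2
          rcases hf2 x with h | h | h <;> rw [hfx] at h
          · simp [h.symm]
          · have : x = b - 1 := by rw [h]; ring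
            simp [this]
          · have : x = b - 2 := by rw [h]; ring
            simp [this]
        apply (card_le_card hsub).trans
        apply (card_insert_le _ _).trans
        apply Nat.succ_le_succ
        apply (card_insert_le _ _).trans
        simp
    _ ≤ 3 * T.card := by
        exact Nat.mul_le_mul_left 3 (card_le_card himg)

/-- `⌈n/3⌉` -/
def mm (n : ℕ) : ℕ := (n + 2) / 3

/-- base offsets: multiples of 3 -/
def O0 (n : ℕ) : Finset ℕ := (range (mm n)).image (fun k => 3 * k)

lemma O0_sub (hn : 3 ≤ n) : O0 n ⊆ range n := by
  intro o ho
  rcases mem_image.mp ho with ⟨k, hk, rfl⟩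
  have := mem_range.mp hk
  simp only [mem_range, mm] at *
  omega

lemma O0_card (hn : 3 ≤ n) : (O0 n).card = mm n := by
  rw [O0, card_image_of_injective _ (fun a b h => by omega), card_range]

lemma O0_cov (hn : 3 ≤ n) :
    ∀ v < n, v ∈ O0 n ∨ (v + 1) % n ∈ O0 n ∨ (v + 2) % n ∈ O0 n := by
  intro v hv
  simp only [O0, mem_image, mem_range, mm]
  by_cases h2 : v + 3 ≤ n
  · rcases (show v % 3 = 0 ∨ v % 3 = 1 ∨ v % 3 = 2 by omega) with h | h | h
    · exact Or.inl ⟨v / 3, by omega, by omega⟩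
    · right; right
      refine ⟨v / 3 + 1, by omega, ?_⟩
      rw [Nat.mod_eq_of_lt (by omega)]; omega
    · right; left
      refine ⟨v / 3 + 1, by omega, ?_⟩
      rw [Nat.mod_eq_of_lt (by omega)]; omega
  · rcases (show v = n - 1 ∨ v = n - 2 by omega) with h | h
    · right; left
      refine ⟨0, by omega, ?_⟩
      rw [show v + 1 = n by omega, Nat.mod_self]
    · right; right
      refine ⟨0, by omega, ?_⟩
      rw [show v + 2 = n by omega, Nat.mod_self]

lemma dissNumOn_univ (hn : 3 ≤ n) :
    dissNumOn (SimpleGraph.cycleGraph n) Set.univ = n - mm n := by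
  have hmn : mm n ≤ n := by unfold mm; omega
  have hbase : Cov (ofOffs (0 : Fin n) (O0 n)) := cov_ofOffs (O0_sub hn) (O0_cov hn)
  have hbasecard : (ofOffs (0 : Fin n) (O0 n)).card = mm n := by
    rw [card_ofOffs (O0_sub hn), O0_card hn]
  unfold dissNumOn
  apply le_antisymm
  · apply csSup_le
    · exact ⟨0, ∅, by simp, fun v hv => by simp at hv, rfl⟩
    · rintro k ⟨s, -, hd, rfl⟩
      have hcov := (isDissoc_iff_cov hn s).mp hd
      have hle := cov_le_card hn hcov
      have hcard : s.card + sᶜ.card = n := by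
        have := Finset.card_compl (α := Fin n) s
        have h2 : s.card ≤ Fintype.card (Fin n) := by
          simpa using card_le_card (subset_univ s)
        simp [Fintype.card_fin] at this h2
        omega
      unfold mm
      omega
  · apply le_csSup
    · refine ⟨n, ?_⟩
      rintro k ⟨s, -, -, rfl⟩
      simpa using card_le_card (subset_univ s)
    · refine ⟨(ofOffs (0 : Fin n) (O0 n))ᶜ, by simp, ?_, ?_⟩
      · rw [isDissoc_iff_cov hn, compl_compl]; exact hbase
      · rw [Finset.card_compl, Fintype.card_fin, hbasecard]

/-- minimum covering sets -/
def MinCov (T : Finset (Fin n)) : Prop := Cov T ∧ T.card = mm n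

lemma isMaxDissoc_iff (hn : 3 ≤ n) (s : Finset (Fin n)) :
    IsMaxDissocOn (SimpleGraph.cycleGraph n) Set.univ s ↔ MinCov sᶜ := by
  have hmn : mm n ≤ n := by unfold mm; omega
  have hcard : s.card + sᶜ.card = n := by
    have := Finset.card_compl (α := Fin n) s
    have h2 : s.card ≤ Fintype.card (Fin n) := by simpa using card_le_card (subset_univ s)
    simp [Fintype.card_fin] at this h2
    omega
  unfold IsMaxDissocOn MinCov
  rw [dissNumOn_univ hn, isDissoc_iff_cov hn]
  constructor
  · rintro ⟨-, hc, he⟩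
    refine ⟨hc, by omega⟩
  · rintro ⟨hc, he⟩
    refine ⟨by simp, hc, by omega⟩

lemma numMaxDissoc_eq_minCov (hn : 3 ≤ n) :
    numMaxDissoc (SimpleGraph.cycleGraph n) = Nat.card {T : Finset (Fin n) // MinCov T} := by
  unfold numMaxDissoc numMaxDissocOn
  apply Nat.card_congr
  refine Equiv.trans (Equiv.subtypeEquivRight (fun s => isMaxDissoc_iff hn s)) ?_
  exact
  { toFun := fun s => ⟨(s : {s : Finset (Fin n) // MinCov sᶜ}).1ᶜ, s.2⟩
    invFun := fun T => ⟨T.1ᶜ, by simpa [compl_compl] using T.2⟩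
    left_inv := fun s => by simp
    right_inv := fun T => by simp }

lemma numMaxDissoc_eq_card (hn : 3 ≤ n) (FF : Finset (Finset (Fin n)))
    (h : ∀ T, MinCov T ↔ T ∈ FF) :
    numMaxDissoc (SimpleGraph.cycleGraph n) = FF.card := by
  rw [numMaxDissoc_eq_minCov hn, Nat.card_congr (Equiv.subtypeEquivRight h),
    Nat.card_eq_fintype_card, Fintype.card_coe]

end Graph

section Windows
variable [NeZero n]

lemma self_ne_add_one (hn : 3 ≤ n) (x : Fin n) : x ≠ x + 1 :=
  fun h => one_ne_zero3 hn (left_eq_add.mp h)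

lemma self_ne_add_two (hn : 3 ≤ n) (x : Fin n) : x ≠ x + 2 :=
  fun h => two_ne_zero3 hn (left_eq_add.mp h)

lemma add_one_ne_add_two (hn : 3 ≤ n) (x : Fin n) : x + 1 ≠ x + 2 :=
  fun h => one_ne_two3 hn (add_left_cancel h)

/-- number of elements of `T` in the window `{x, x+1, x+2}` -/
noncomputable def wcnt (T : Finset (Fin n)) (x : Fin n) : ℕ :=
  (T.filter (fun t => t = x ∨ t = x + 1 ∨ t = x + 2)).card

lemma wcnt_eq (hn : 3 ≤ n) (T : Finset (Fin n)) (x : Fin n) :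
    wcnt T x = (if x ∈ T then 1 else 0) + (if x + 1 ∈ T then 1 else 0)
      + (if x + 2 ∈ T then 1 else 0) := by
  classical
  have h1 : x ≠ x + 1 := self_ne_add_one hn x
  have h2 : x ≠ x + 2 := self_ne_add_two hn x
  have h3 : x + 1 ≠ x + 2 := add_one_ne_add_two hn x
  unfold wcnt
  rw [filter_or, filter_or, filter_eq', filter_eq', filter_eq']
  by_cases hx : x ∈ T <;> by_cases hy : x + 1 ∈ T <;> by_cases hz : x + 2 ∈ T <;>
    simp [hx, hy, hz, ← insert_eq, card_insert_of_notMem, h1, h2, h3, Ne.symm]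

lemma wcnt_pos_of_cov {T : Finset (Fin n)} (hT : Cov T) (hn : 3 ≤ n) (x : Fin n) :
    1 ≤ wcnt T x := by
  rw [wcnt_eq hn]
  rcases hT x with h | h | h <;> simp [h] <;> split_ifs <;> omega

lemma cov_of_wcnt (hn : 3 ≤ n) {T : Finset (Fin n)} (h : ∀ x, 1 ≤ wcnt T x) : Cov T := by
  intro x
  have := h x
  rw [wcnt_eq hn] at this
  by_cases hx : x ∈ T <;> by_cases hy : x + 1 ∈ T <;> by_cases hz : x + 2 ∈ T <;>
    simp [hx, hy, hz] at this ⊢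

lemma sum_wcnt (hn : 3 ≤ n) (T : Finset (Fin n)) :
    ∑ x : Fin n, wcnt T x = 3 * T.card := by
  classical
  unfold wcnt
  have hrw : ∀ x : Fin n, (T.filter (fun t => t = x ∨ t = x + 1 ∨ t = x + 2)).card
      = ∑ t ∈ T, if t = x ∨ t = x + 1 ∨ t = x + 2 then 1 else 0 := by
    intro x; rw [Finset.card_filter]
  simp only [hrw]
  rw [Finset.sum_comm]
  have hin : ∀ t : Fin n, (∑ x : Fin n, if t = x ∨ t = x + 1 ∨ t = x + 2 then 1 else 0) = 3 := by
    intro t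
    rw [← Finset.card_filter]
    have he : (univ.filter (fun x : Fin n => t = x ∨ t = x + 1 ∨ t = x + 2))
        = {t, t - 1, t - 2} := by
      ext z
      simp only [mem_filter, mem_univ, true_and, mem_insert, mem_singleton]
      constructor
      · rintro (h | h | h)
        · exact Or.inl h.symm
        · exact Or.inr (Or.inl (by rw [h]; ring))
        · exact Or.inr (Or.inr (by rw [h]; ring))
      · rintro (rfl | rfl | rfl)
        · exact Or.inl rfl
        · exact Or.inr (Or.inl (by ring))
        · exact Or.inr (Or.inr (by ring))
    rw [he]
    have d1 : t ≠ t - 1 := by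
      intro h
      exact one_ne_zero3 hn (by rwa [eq_comm, sub_eq_self] at h)
    have d2 : t ≠ t - 2 := by
      intro h
      exact two_ne_zero3 hn (by rwa [eq_comm, sub_eq_self] at h)
    have d3 : t - 1 ≠ t - 2 := by
      intro h
      exact one_ne_two3 hn (sub_right_inj.mp h)
    rw [card_insert_of_notMem (by simp [d1, d2]), card_pair d3]
  rw [Finset.sum_congr rfl (fun t _ => hin t), Finset.sum_const, smul_eq_mul, mul_comm]

end Windows

section SumHelpers
variable {α : Type*} [DecidableEq α]

lemma sum_eq_card_struct {s : Finset α} {f : α → ℕ} (h1 : ∀ x ∈ s, 1 ≤ f x)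
    (h : ∑ x ∈ s, f x = s.card) : ∀ x ∈ s, f x = 1 := by
  intro x hx
  by_contra hne
  have hx2 : 2 ≤ f x := by have := h1 x hx; omega
  have hrest : (s.erase x).card ≤ ∑ y ∈ s.erase x, f y := by
    simpa using Finset.card_nsmul_le_sum (s.erase x) f 1
      (fun y hy => h1 y (mem_of_mem_erase hy))
  have hsplit : f x + ∑ y ∈ s.erase x, f y = ∑ y ∈ s, f y := Finset.add_sum_erase s f hx
  have hce : (s.erase x).card = s.card - 1 := card_erase_of_mem hx
  have hcpos : 1 ≤ s.card := card_pos.mpr ⟨x, hx⟩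
  omega

lemma exists_big {s : Finset α} {f : α → ℕ} (h1 : ∀ x ∈ s, 1 ≤ f x)
    (h : s.card < ∑ x ∈ s, f x) : ∃ x ∈ s, 2 ≤ f x := by
  by_contra hc
  push_neg at hc
  have : ∑ x ∈ s, f x ≤ s.card := by
    calc ∑ x ∈ s, f x ≤ ∑ x ∈ s, 1 := Finset.sum_le_sum (fun x hx => by
      have := h1 x hx; have := hc x hx; omega)
      _ = s.card := by simp
  omega

lemma sum_eq_card_add_one_struct {s : Finset α} {f : α → ℕ} (h1 : ∀ x ∈ s, 1 ≤ f x)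
    (h : ∑ x ∈ s, f x = s.card + 1) :
    ∃ x₀ ∈ s, f x₀ = 2 ∧ ∀ x ∈ s, x ≠ x₀ → f x = 1 := by
  obtain ⟨x₀, hx₀, hbig⟩ := exists_big h1 (by omega)
  have hsplit : f x₀ + ∑ y ∈ s.erase x₀, f y = ∑ y ∈ s, f y := Finset.add_sum_erase s f hx₀
  have hrest : (s.erase x₀).card ≤ ∑ y ∈ s.erase x₀, f y := by
    simpa using Finset.card_nsmul_le_sum (s.erase x₀) f 1
      (fun y hy => h1 y (mem_of_mem_erase hy))
  have hce : (s.erase x₀).card = s.card - 1 := card_erase_of_mem hx₀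
  have hcpos : 1 ≤ s.card := card_pos.mpr ⟨x₀, hx₀⟩
  have hf2 : f x₀ = 2 := by omega
  have hsum' : ∑ y ∈ s.erase x₀, f y = (s.erase x₀).card := by omega
  refine ⟨x₀, hx₀, hf2, fun x hx hne => ?_⟩
  exact sum_eq_card_struct (fun y hy => h1 y (mem_of_mem_erase hy)) hsum' x
    (mem_erase.mpr ⟨hne, hx⟩)

lemma sum_eq_card_add_two_struct {s : Finset α} {f : α → ℕ} (h1 : ∀ x ∈ s, 1 ≤ f x)
    (h : ∑ x ∈ s, f x = s.card + 2) :
    (∃ x₀ ∈ s, f x₀ = 3 ∧ ∀ x ∈ s, x ≠ x₀ → f x = 1) ∨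
    (∃ x₀ ∈ s, ∃ x₁ ∈ s, x₀ ≠ x₁ ∧ f x₀ = 2 ∧ f x₁ = 2 ∧
      ∀ x ∈ s, x ≠ x₀ → x ≠ x₁ → f x = 1) := by
  obtain ⟨x₀, hx₀, hbig⟩ := exists_big h1 (by omega)
  have hsplit : f x₀ + ∑ y ∈ s.erase x₀, f y = ∑ y ∈ s, f y := Finset.add_sum_erase s f hx₀
  have hrest : (s.erase x₀).card ≤ ∑ y ∈ s.erase x₀, f y := by
    simpa using Finset.card_nsmul_le_sum (s.erase x₀) f 1
      (fun y hy => h1 y (mem_of_mem_erase hy))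
  have hce : (s.erase x₀).card = s.card - 1 := card_erase_of_mem hx₀
  have hcpos : 1 ≤ s.card := card_pos.mpr ⟨x₀, hx₀⟩
  have hf23 : f x₀ = 2 ∨ f x₀ = 3 := by omega
  rcases hf23 with hf2 | hf3
  · right
    have hsum' : ∑ y ∈ s.erase x₀, f y = (s.erase x₀).card + 1 := by omega
    obtain ⟨x₁, hx₁, hfx₁, hrest1⟩ :=
      sum_eq_card_add_one_struct (fun y hy => h1 y (mem_of_mem_erase hy)) hsum'
    refine ⟨x₀, hx₀, x₁, mem_of_mem_erase hx₁, (mem_erase.mp hx₁).1.symm, hf2, hfx₁, ?_⟩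
    intro x hx hne0 hne1
    exact hrest1 x (mem_erase.mpr ⟨hne0, hx⟩) hne1
  · left
    have hsum' : ∑ y ∈ s.erase x₀, f y = (s.erase x₀).card := by omega
    refine ⟨x₀, hx₀, hf3, fun x hx hne => ?_⟩
    exact sum_eq_card_struct (fun y hy => h1 y (mem_of_mem_erase hy)) hsum' x
      (mem_erase.mpr ⟨hne, hx⟩)

end SumHelpers

section Case0
variable [NeZero n]

lemma card_univ_fin : (univ : Finset (Fin n)).card = n := by simp

lemma minCov_wcnt_sum (hn : 3 ≤ n) {T : Finset (Fin n)} (hT : MinCov T) :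
    ∑ x : Fin n, wcnt T x = 3 * mm n := by
  rw [sum_wcnt hn, hT.2]

lemma chain_gen (hn : 3 ≤ n) {T : Finset (Fin n)} {t : Fin n} {r jmax : ℕ} (hr : r < 3)
    (hmax : jmax < n)
    (H : ∀ j, 3 ≤ j → j ≤ jmax → wcnt T (t + ((j - 2 : ℕ) : Fin n)) = 1)
    (h1 : (t + ((1 : ℕ) : Fin n) ∈ T ↔ 1 % 3 = r))
    (h2 : (t + ((2 : ℕ) : Fin n) ∈ T ↔ 2 % 3 = r)) :
    ∀ j, 1 ≤ j → j ≤ jmax → (t + ((j : ℕ) : Fin n) ∈ T ↔ j % 3 = r) := by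
  intro j
  induction j using Nat.strong_induction_on with
  | _ j IH =>
    intro hj1 hj
    match j, hj1, hj with
    | 1, _, hj => exact h1
    | 2, _, hj => exact h2
    | (j + 3), _, hj =>
      set j' := j + 3 with hj'
      have e1 : t + ((j' - 2 : ℕ) : Fin n) + 1 = t + ((j' - 1 : ℕ) : Fin n) := by
        have h : (j' - 1 : ℕ) = (j' - 2) + 1 := by omega
        rw [h, Nat.cast_add, Nat.cast_one]; ring
      have e2 : t + ((j' - 2 : ℕ) : Fin n) + 2 = t + ((j' : ℕ) : Fin n) := by
        conv_rhs => rw [show (j' : ℕ) = (j' - 2) + 2 from by omega]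
        rw [Nat.cast_add, Nat.cast_ofNat]; ring
      have hw := wcnt_eq hn T (t + ((j' - 2 : ℕ) : Fin n))
      rw [H j' (by omega) hj, e1, e2] at hw
      have ih1 := IH (j' - 2) (by omega) (by omega) (by omega)
      have ih2 := IH (j' - 1) (by omega) (by omega) (by omega)
      by_cases hA : t + ((j' - 2 : ℕ) : Fin n) ∈ T <;>
        by_cases hB : t + ((j' - 1 : ℕ) : Fin n) ∈ T <;>
        by_cases hC : t + ((j' : ℕ) : Fin n) ∈ T <;>
        simp only [hA, hB, hC, if_true, if_false, iff_true, iff_false,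
          eq_self_iff_true, true_iff, false_iff] at hw ih1 ih2 ⊢ <;>
        omega

lemma minCov0_struct (hn : 3 ≤ n) (h3 : n % 3 = 0) {T : Finset (Fin n)} (hT : MinCov T) :
    ∃ t ∈ T, T = ofOffs t (O0 n) := by
  have hall : ∀ x : Fin n, wcnt T x = 1 := by
    have hsum : ∑ x ∈ (univ : Finset (Fin n)), wcnt T x = (univ : Finset (Fin n)).card := by
      rw [minCov_wcnt_sum hn hT, card_univ_fin]
      unfold mm; omega
    intro x
    exact sum_eq_card_struct (fun y _ => wcnt_pos_of_cov hT.1 hn y) hsum x (mem_univ x)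
  have hne : T.Nonempty := by
    rw [← card_pos, hT.2]; unfold mm; omega
  obtain ⟨t, ht⟩ := hne
  have hker : ∀ x : Fin n, x ∈ T → x + 1 ∉ T ∧ x + 2 ∉ T := by
    intro x hx
    have hw := wcnt_eq hn T x
    rw [hall x] at hw
    constructor <;> by_contra hc <;> simp [hx, hc] at hw <;> split_ifs at hw <;> omega
  have hchain := chain_gen hn (T := T) (t := t) (r := 0) (jmax := n - 1) (by omega) (by omega)
    (fun j _ _ => hall _)
    (by have := hker t ht; simpa using this.1)
    (by have := hker t ht; simpa using this.2)
  refine ⟨t, ht, ?_⟩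
  ext x
  rw [mem_ofOffs (O0_sub hn)]
  have hx : x = t + (((x - t).val : ℕ) : Fin n) := by
    rw [Fin.cast_val_eq_self]; ring
  have hlt := (x - t).isLt
  by_cases hv : (x - t).val = 0
  · have hxt : x = t := by
      have h0 : x - t = 0 := Fin.ext (by simpa using hv)
      exact sub_eq_zero.mp h0
    simp only [O0, mem_image, mem_range, mm]
    refine ⟨fun _ => ⟨0, by omega, by omega⟩, fun _ => by rw [hxt]; exact ht⟩
  · have hmem := hchain (x - t).val (by omega) (by omega)
    rw [← hx] at hmem
    rw [hmem]
    simp only [O0, mem_image, mem_range, mm]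
    constructor
    · intro h; exact ⟨(x - t).val / 3, by omega, by omega⟩
    · rintro ⟨k, hk, hko⟩; omega

lemma sub_val_eq (x a : Fin n) : (x - a).val = (x.val + (n - a.val)) % n := by
  rw [Fin.sub_def]; simp [Nat.add_comm]

lemma mem_V (hn : 3 ≤ n) (h3 : n % 3 = 0) (a x : Fin n) :
    x ∈ ofOffs a (O0 n) ↔ (x.val + (n - a.val)) % 3 = 0 := by
  rw [mem_ofOffs (O0_sub hn)]
  have hlt := (x - a).isLt
  have h1 : (x - a).val % 3 = (x.val + (n - a.val)) % 3 := by
    rw [sub_val_eq, Nat.mod_mod_of_dvd _ (by omega : (3 : ℕ) ∣ n)]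
  simp only [O0, mem_image, mem_range, mm]
  constructor
  · rintro ⟨k, hk, hko⟩; omega
  · intro h
    refine ⟨(x - a).val / 3, by omega, by omega⟩

lemma V_eq (hn : 3 ≤ n) (h3 : n % 3 = 0) {a b : Fin n} (hab : a.val % 3 = b.val % 3) :
    ofOffs a (O0 n) = ofOffs b (O0 n) := by
  ext x
  rw [mem_V hn h3, mem_V hn h3]
  have ha := a.isLt
  have hb := b.isLt
  omega

lemma minCov_ofOffs_O0 (hn : 3 ≤ n) (h3 : n % 3 = 0) (a : Fin n) :
    MinCov (ofOffs a (O0 n)) :=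
  ⟨cov_ofOffs (O0_sub hn) (O0_cov hn), by rw [card_ofOffs (O0_sub hn), O0_card hn]⟩

lemma case0 (hn : 3 ≤ n) (h3 : n % 3 = 0) :
    numMaxDissoc (SimpleGraph.cycleGraph n) = 3 := by
  classical
  set FF : Finset (Finset (Fin n)) :=
    {ofOffs (0 : Fin n) (O0 n), ofOffs (1 : Fin n) (O0 n), ofOffs (2 : Fin n) (O0 n)} with hFF
  have hiff : ∀ T, MinCov T ↔ T ∈ FF := by
    intro T
    constructor
    · intro hT
      obtain ⟨t, ht, rfl⟩ := minCov0_struct hn h3 hT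
      have h0' : (0 : Fin n).val = 0 := rfl
      rcases (show t.val % 3 = 0 ∨ t.val % 3 = 1 ∨ t.val % 3 = 2 by omega) with h | h | h
      · have := V_eq hn h3 (a := t) (b := (0 : Fin n)) (by rw [h0']; omega)
        rw [this]; simp [hFF]
      · have := V_eq hn h3 (a := t) (b := (1 : Fin n)) (by rw [val_one3 hn]; omega)
        rw [this]; simp [hFF]
      · have := V_eq hn h3 (a := t) (b := (2 : Fin n)) (by rw [val_two3 hn]; omega)
        rw [this]; simp [hFF]
    · intro hT
      rcases mem_insert.mp hT with h | h
      · rw [h]; exact minCov_ofOffs_O0 hn h3 _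
      rcases mem_insert.mp h with h' | h'
      · rw [h']; exact minCov_ofOffs_O0 hn h3 _
      · rw [mem_singleton.mp h']; exact minCov_ofOffs_O0 hn h3 _
  rw [numMaxDissoc_eq_card hn FF hiff]
  have m01 : (0 : Fin n) ∉ ofOffs (1 : Fin n) (O0 n) := by
    rw [mem_V hn h3]
    rw [val_one3 hn]; simp; omega
  have m02 : (0 : Fin n) ∉ ofOffs (2 : Fin n) (O0 n) := by
    rw [mem_V hn h3]
    rw [val_two3 hn]; simp; omega
  have m00 : (0 : Fin n) ∈ ofOffs (0 : Fin n) (O0 n) := by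
    rw [mem_V hn h3]; simp; omega
  have m11 : (1 : Fin n) ∈ ofOffs (1 : Fin n) (O0 n) := by
    rw [mem_V hn h3, val_one3 hn]; omega
  have m12 : (1 : Fin n) ∉ ofOffs (2 : Fin n) (O0 n) := by
    rw [mem_V hn h3, val_one3 hn, val_two3 hn]; omega
  have d1 : ofOffs (0 : Fin n) (O0 n) ≠ ofOffs (1 : Fin n) (O0 n) := by
    intro h; rw [h] at m00; exact m01 m00
  have d2 : ofOffs (0 : Fin n) (O0 n) ≠ ofOffs (2 : Fin n) (O0 n) := by
    intro h; rw [h] at m00; exact m02 m00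
  have d3 : ofOffs (1 : Fin n) (O0 n) ≠ ofOffs (2 : Fin n) (O0 n) := by
    intro h; rw [h] at m11; exact m12 m11
  rw [hFF, card_insert_of_notMem (by simp [d1, d2]), card_pair d3]

end Case0

section Case2
variable [NeZero n]

lemma sub_one_ne (hn : 3 ≤ n) (x : Fin n) : x - 1 ≠ x :=
  fun h => one_ne_zero3 hn (by rwa [sub_eq_self] at h)

lemma cast_pos_ne_zero (hn : 3 ≤ n) {o : ℕ} (h0 : 0 < o) (h1 : o < n) : (o : Fin n) ≠ 0 := by
  intro h
  have := congrArg Fin.val h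
  rw [Fin.val_natCast, Nat.mod_eq_of_lt h1, Fin.val_zero] at this
  omega

lemma add_cast_ne (hn : 3 ≤ n) (t : Fin n) {o : ℕ} (h0 : 0 < o) (h1 : o < n) :
    t + (o : Fin n) ≠ t := by
  intro h
  exact cast_pos_ne_zero hn h0 h1 (by rwa [add_eq_left] at h)

/-- offsets for the `n % 3 = 2` family -/
def OU (n : ℕ) : Finset ℕ := insert 0 ((range (mm n - 1)).image (fun k => 2 + 3 * k))

lemma mem_OU (hn : 3 ≤ n) (h2 : n % 3 = 2) (o : ℕ) :
    o ∈ OU n ↔ o = 0 ∨ (o % 3 = 2 ∧ 2 ≤ o ∧ o ≤ n - 3) := by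
  simp only [OU, mem_insert, mem_image, mem_range, mm]
  constructor
  · rintro (rfl | ⟨k, hk, rfl⟩)
    · exact Or.inl rfl
    · right; omega
  · rintro (rfl | ⟨hm, h2o, hle⟩)
    · exact Or.inl rfl
    · exact Or.inr ⟨(o - 2) / 3, by omega, by omega⟩

lemma OU_sub (hn : 3 ≤ n) (h2 : n % 3 = 2) : OU n ⊆ range n := by
  intro o ho
  rw [mem_OU hn h2] at ho
  rw [mem_range]
  omega

lemma OU_card (hn : 3 ≤ n) (h2 : n % 3 = 2) : (OU n).card = mm n := by
  rw [OU, card_insert_of_notMem, card_image_of_injective _ (fun a b h => by omega), card_range]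
  · unfold mm; omega
  · intro h
    rcases mem_image.mp h with ⟨k, -, hk⟩
    omega

lemma OU_cov (hn : 3 ≤ n) (h2 : n % 3 = 2) :
    ∀ v < n, v ∈ OU n ∨ (v + 1) % n ∈ OU n ∨ (v + 2) % n ∈ OU n := by
  intro v hv
  rw [mem_OU hn h2, mem_OU hn h2, mem_OU hn h2]
  by_cases hb : v + 3 ≤ n
  · rw [Nat.mod_eq_of_lt (show v + 1 < n by omega), Nat.mod_eq_of_lt (show v + 2 < n by omega)]
    omega
  · rcases (show v = n - 1 ∨ v = n - 2 by omega) with h | h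
    · rw [show v + 1 = n by omega, Nat.mod_self,
        show v + 2 = n + 1 by omega, Nat.add_mod_left,
        Nat.mod_eq_of_lt (show 1 < n by omega)]
      omega
    · rw [show v + 2 = n by omega, Nat.mod_self,
        Nat.mod_eq_of_lt (show v + 1 < n by omega)]
      omega

lemma minCov_ofOffs_OU (hn : 3 ≤ n) (h2 : n % 3 = 2) (a : Fin n) :
    MinCov (ofOffs a (OU n)) :=
  ⟨cov_ofOffs (OU_sub hn h2) (OU_cov hn h2),
    by rw [card_ofOffs (OU_sub hn h2), OU_card hn h2]⟩

lemma minCov2_struct (hn : 3 ≤ n) (h2 : n % 3 = 2) {T : Finset (Fin n)} (hT : MinCov T) :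
    ∃ a : Fin n, T = ofOffs a (OU n) := by
  have hsum : ∑ x ∈ (univ : Finset (Fin n)), wcnt T x = (univ : Finset (Fin n)).card + 1 := by
    rw [minCov_wcnt_sum hn hT, card_univ_fin]
    unfold mm; omega
  obtain ⟨a, -, hwa, hall'⟩ :=
    sum_eq_card_add_one_struct (fun y _ => wcnt_pos_of_cov hT.1 hn y) hsum
  have hall : ∀ x : Fin n, x ≠ a → wcnt T x = 1 := fun x hx => hall' x (mem_univ x) hx
  -- no two adjacent elements in windows next to `a`
  have hnot11 : ¬(a ∈ T ∧ a + 1 ∈ T) := by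
    rintro ⟨u0, u1⟩
    have hw' := wcnt_eq hn T (a - 1)
    rw [hall (a - 1) (sub_one_ne hn a),
      show a - 1 + 1 = a by ring, show a - 1 + 2 = a + 1 by ring] at hw'
    simp only [u0, u1, if_true] at hw'
    split_ifs at hw' <;> omega
  have hnot12 : ¬(a + 1 ∈ T ∧ a + 2 ∈ T) := by
    rintro ⟨u1, u2⟩
    have hw' := wcnt_eq hn T (a + 1)
    rw [hall (a + 1) (self_ne_add_one hn a).symm,
      show a + 1 + 1 = a + 2 by ring] at hw'
    simp only [u1, u2, if_true] at hw'
    split_ifs at hw' <;> omega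
  have hw := wcnt_eq hn T a
  rw [hwa] at hw
  have pat : a ∈ T ∧ a + 1 ∉ T ∧ a + 2 ∈ T := by
    by_cases m1 : a + 1 ∈ T
    · exfalso
      by_cases m0 : a ∈ T
      · exact hnot11 ⟨m0, m1⟩
      · by_cases m2 : a + 2 ∈ T
        · exact hnot12 ⟨m1, m2⟩
        · simp only [m0, m1, m2, ite_true, ite_false] at hw; omega
    · by_cases m0 : a ∈ T
      · by_cases m2 : a + 2 ∈ T
        · exact ⟨m0, m1, m2⟩
        · simp only [m0, m1, m2, ite_true, ite_false] at hw; omega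
      · simp only [m0, m1, ite_true, ite_false] at hw
        split_ifs at hw <;> omega
  have hchain := chain_gen hn (T := T) (t := a) (r := 2) (jmax := n - 1) (by omega) (by omega)
    (fun j h3j hj => hall _ (add_cast_ne hn a (by omega) (by omega)))
    (by rw [Nat.cast_one]; simpa using pat.2.1)
    (by rw [Nat.cast_ofNat]; simpa using pat.2.2)
  refine ⟨a, ?_⟩
  ext x
  rw [mem_ofOffs (OU_sub hn h2), mem_OU hn h2]
  have hlt := (x - a).isLt
  by_cases hv : (x - a).val = 0
  · have hxa : x = a := by
      have h0 : x - a = 0 := Fin.ext (by simpa using hv)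
      exact sub_eq_zero.mp h0
    refine ⟨fun _ => Or.inl hv, fun _ => by rw [hxa]; exact pat.1⟩
  · have hx : x = a + (((x - a).val : ℕ) : Fin n) := by
      rw [Fin.cast_val_eq_self]; ring
    have hmem := hchain (x - a).val (by omega) (by omega)
    rw [← hx] at hmem
    rw [hmem]
    omega

lemma ofOU_inj (hn : 3 ≤ n) (h2 : n % 3 = 2) :
    Function.Injective (fun a : Fin n => ofOffs a (OU n)) := by
  intro a b hab
  simp only at hab
  have hn5 : 5 ≤ n := by omega
  -- memberships of b, b+1, b+2 transported through the equality
  have hb0 : b ∈ ofOffs a (OU n) := by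
    rw [hab, mem_ofOffs (OU_sub hn h2), mem_OU hn h2]
    left; simp
  have hb1 : b + ((1 : ℕ) : Fin n) ∉ ofOffs a (OU n) := by
    rw [hab, mem_ofOffs (OU_sub hn h2), mem_OU hn h2]
    have : (b + ((1 : ℕ) : Fin n) - b) = ((1 : ℕ) : Fin n) := by ring
    rw [this, Fin.val_natCast, Nat.mod_eq_of_lt (by omega)]
    omega
  have hb2 : b + ((2 : ℕ) : Fin n) ∈ ofOffs b (OU n) := by
    rw [mem_ofOffs (OU_sub hn h2), mem_OU hn h2]
    have : (b + ((2 : ℕ) : Fin n) - b) = ((2 : ℕ) : Fin n) := by ring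
    rw [this, Fin.val_natCast, Nat.mod_eq_of_lt (by omega)]
    omega
  rw [← hab] at hb2
  rw [mem_ofOffs (OU_sub hn h2), mem_OU hn h2] at hb0 hb1 hb2
  set v := (b - a).val with hvdef
  have hlt : v < n := (b - a).isLt
  have e1 : b + ((1 : ℕ) : Fin n) - a = (b - a) + ((1 : ℕ) : Fin n) := by ring
  have e2 : b + ((2 : ℕ) : Fin n) - a = (b - a) + ((2 : ℕ) : Fin n) := by ring
  rw [e1, add_cast_val] at hb1
  rw [e2, add_cast_val] at hb2
  have hv0 : v = 0 := by
    rcases hb0 with h | ⟨hm, h2v, hle⟩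
    · exact h
    · exfalso
      rw [Nat.mod_eq_of_lt (by omega : v + 2 < n)] at hb2
      omega
  have hz : b - a = 0 := Fin.ext (by rw [Fin.val_zero]; exact hv0)
  exact (sub_eq_zero.mp hz).symm

lemma case2 (hn : 3 ≤ n) (h2 : n % 3 = 2) :
    numMaxDissoc (SimpleGraph.cycleGraph n) = n := by
  classical
  set FF : Finset (Finset (Fin n)) :=
    (univ : Finset (Fin n)).image (fun a => ofOffs a (OU n)) with hFF
  have hiff : ∀ T, MinCov T ↔ T ∈ FF := by
    intro T
    constructor
    · intro hT
      obtain ⟨a, rfl⟩ := minCov2_struct hn h2 hT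
      exact mem_image.mpr ⟨a, mem_univ a, rfl⟩
    · intro hT
      obtain ⟨a, -, rfl⟩ := mem_image.mp hT
      exact minCov_ofOffs_OU hn h2 a
  rw [numMaxDissoc_eq_card hn FF hiff, hFF,
    card_image_of_injective _ (ofOU_inj hn h2), card_univ_fin]

end Case2

section Case1
variable [NeZero n]

/-- offsets for the `A`-type family (`n % 3 = 1`) -/
def OA (n : ℕ) : Finset ℕ := insert 0 ((range (mm n - 1)).image (fun k => 1 + 3 * k))

/-- offsets for the `B`-type family (`n % 3 = 1`) -/
def OB (n j : ℕ) : Finset ℕ :=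
  insert 0 (((range (j + 1)).image (fun k => 2 + 3 * k)) ∪
    ((range (mm n - 2 - j)).image (fun k => 4 + 3 * j + 3 * k)))

lemma h3m_1 (hn : 3 ≤ n) (h1 : n % 3 = 1) : 3 * mm n = n + 2 := by unfold mm; omega

lemma mem_OA (hn : 3 ≤ n) (h1 : n % 3 = 1) (o : ℕ) :
    o ∈ OA n ↔ o = 0 ∨ (o % 3 = 1 ∧ 1 ≤ o ∧ o ≤ n - 3) := by
  have h3m := h3m_1 hn h1
  simp only [OA, mem_insert, mem_image, mem_range]
  constructor
  · rintro (rfl | ⟨k, hk, rfl⟩)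
    · exact Or.inl rfl
    · right; omega
  · rintro (rfl | ⟨hm, h1o, hle⟩)
    · exact Or.inl rfl
    · exact Or.inr ⟨(o - 1) / 3, by omega, by omega⟩

lemma mem_OB (hn : 3 ≤ n) (h1 : n % 3 = 1) {j : ℕ} (hj : j ≤ mm n - 2) (o : ℕ) :
    o ∈ OB n j ↔ o = 0 ∨ (o % 3 = 2 ∧ 2 ≤ o ∧ o ≤ 2 + 3 * j) ∨
      (o % 3 = 1 ∧ 4 + 3 * j ≤ o ∧ o ≤ n - 3) := by
  have h3m := h3m_1 hn h1
  simp only [OB, mem_insert, mem_union, mem_image, mem_range]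
  constructor
  · rintro (rfl | ⟨k, hk, rfl⟩ | ⟨k, hk, rfl⟩)
    · exact Or.inl rfl
    · right; left; omega
    · right; right; omega
  · rintro (rfl | ⟨hm, h2o, hle⟩ | ⟨hm, hge, hle⟩)
    · exact Or.inl rfl
    · exact Or.inr (Or.inl ⟨(o - 2) / 3, by omega, by omega⟩)
    · exact Or.inr (Or.inr ⟨(o - 4 - 3 * j) / 3, by omega, by omega⟩)

lemma OA_sub (hn : 3 ≤ n) (h1 : n % 3 = 1) : OA n ⊆ range n := by
  intro o ho; rw [mem_OA hn h1] at ho; rw [mem_range]; omega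

lemma OB_sub (hn : 3 ≤ n) (h1 : n % 3 = 1) {j : ℕ} (hj : j ≤ mm n - 2) :
    OB n j ⊆ range n := by
  have h3m := h3m_1 hn h1
  intro o ho; rw [mem_OB hn h1 hj] at ho; rw [mem_range]; omega

lemma OA_card (hn : 3 ≤ n) (h1 : n % 3 = 1) : (OA n).card = mm n := by
  have h3m := h3m_1 hn h1
  rw [OA, card_insert_of_notMem, card_image_of_injective _ (fun a b h => by omega), card_range]
  · omega
  · intro h; rcases mem_image.mp h with ⟨k, -, hk⟩; omega

lemma OB_card (hn : 3 ≤ n) (h1 : n % 3 = 1) {j : ℕ} (hj : j ≤ mm n - 2) :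
    (OB n j).card = mm n := by
  have h3m := h3m_1 hn h1
  rw [OB, card_insert_of_notMem, card_union_of_disjoint,
    card_image_of_injective _ (fun a b h => by omega),
    card_image_of_injective _ (fun a b h => by omega), card_range, card_range]
  · omega
  · rw [disjoint_left]
    intro o ho ho'
    rcases mem_image.mp ho with ⟨k, -, hk⟩
    rcases mem_image.mp ho' with ⟨k', -, hk'⟩
    omega
  · intro h
    rcases mem_union.mp h with h' | h' <;> rcases mem_image.mp h' with ⟨k, -, hk⟩ <;> omega

lemma OA_cov (hn : 3 ≤ n) (h1 : n % 3 = 1) :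
    ∀ v < n, v ∈ OA n ∨ (v + 1) % n ∈ OA n ∨ (v + 2) % n ∈ OA n := by
  have h3m := h3m_1 hn h1
  intro v hv
  rw [mem_OA hn h1, mem_OA hn h1, mem_OA hn h1]
  by_cases hb : v + 3 ≤ n
  · rw [Nat.mod_eq_of_lt (show v + 1 < n by omega), Nat.mod_eq_of_lt (show v + 2 < n by omega)]
    omega
  · rcases (show v = n - 1 ∨ v = n - 2 by omega) with h | h
    · rw [show v + 1 = n by omega, Nat.mod_self,
        show v + 2 = n + 1 by omega, Nat.add_mod_left,
        Nat.mod_eq_of_lt (show 1 < n by omega)]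
      omega
    · rw [show v + 2 = n by omega, Nat.mod_self,
        Nat.mod_eq_of_lt (show v + 1 < n by omega)]
      omega

lemma OB_cov (hn : 3 ≤ n) (h1 : n % 3 = 1) {j : ℕ} (hj : j ≤ mm n - 2) :
    ∀ v < n, v ∈ OB n j ∨ (v + 1) % n ∈ OB n j ∨ (v + 2) % n ∈ OB n j := by
  have h3m := h3m_1 hn h1
  intro v hv
  rw [mem_OB hn h1 hj, mem_OB hn h1 hj, mem_OB hn h1 hj]
  by_cases hb : v + 3 ≤ n
  · rw [Nat.mod_eq_of_lt (show v + 1 < n by omega), Nat.mod_eq_of_lt (show v + 2 < n by omega)]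
    omega
  · rcases (show v = n - 1 ∨ v = n - 2 by omega) with h | h
    · rw [show v + 1 = n by omega, Nat.mod_self,
        show v + 2 = n + 1 by omega, Nat.add_mod_left,
        Nat.mod_eq_of_lt (show 1 < n by omega)]
      omega
    · rw [show v + 2 = n by omega, Nat.mod_self,
        Nat.mod_eq_of_lt (show v + 1 < n by omega)]
      omega

lemma minCov_OA (hn : 3 ≤ n) (h1 : n % 3 = 1) (t : Fin n) : MinCov (ofOffs t (OA n)) :=
  ⟨cov_ofOffs (OA_sub hn h1) (OA_cov hn h1),
    by rw [card_ofOffs (OA_sub hn h1), OA_card hn h1]⟩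

lemma minCov_OB (hn : 3 ≤ n) (h1 : n % 3 = 1) {j : ℕ} (hj : j ≤ mm n - 2) (u : Fin n) :
    MinCov (ofOffs u (OB n j)) :=
  ⟨cov_ofOffs (OB_sub hn h1 hj) (OB_cov hn h1 hj),
    by rw [card_ofOffs (OB_sub hn h1 hj), OB_card hn h1 hj]⟩

lemma sub_val_add_sub_val {a b : Fin n} (hab : a ≠ b) : (a - b).val + (b - a).val = n := by
  have h0 : (a - b) + (b - a) = 0 := by ring
  have h1 : ((a - b).val + (b - a).val) % n = 0 := by
    have h2 : ((a - b) + (b - a)).val = ((a - b).val + (b - a).val) % n := by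
      rw [Fin.add_def]
    rw [h0] at h2
    simpa using h2.symm
  have hne : (a - b).val ≠ 0 := by
    intro h
    exact hab (sub_eq_zero.mp (Fin.ext (by simpa using h)))
  have l1 := (a - b).isLt
  have l2 := (b - a).isLt
  rcases Nat.lt_or_ge ((a - b).val + (b - a).val) n with hc | hc
  · rw [Nat.mod_eq_of_lt hc] at h1; omega
  · rw [Nat.mod_eq_sub_mod hc, Nat.mod_eq_of_lt (by omega)] at h1; omega

lemma add_cast_ne_sub_one (hn : 3 ≤ n) (t : Fin n) {o : ℕ} (hlt : o + 1 < n) :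
    t + (o : Fin n) ≠ t - 1 := by
  intro h
  have h3 : t + ((o + 1 : ℕ) : Fin n) = t := by
    rw [Nat.cast_add, Nat.cast_one, ← add_assoc, h]; ring
  exact cast_pos_ne_zero hn (by omega) hlt (add_eq_left.mp h3)

lemma cast_n_sub_one (hn : 3 ≤ n) : ((n - 1 : ℕ) : Fin n) = -1 := by
  have h : ((n - 1 : ℕ) : Fin n) + ((1 : ℕ) : Fin n) = 0 := by
    rw [← Nat.cast_add, show n - 1 + 1 = n from by omega]
    exact Fin.natCast_self n
  have := eq_neg_of_add_eq_zero_left h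
  simpa using this

end Case1

section Case1b
variable [NeZero n]

lemma caseA_conclude (hn : 3 ≤ n) (h1 : n % 3 = 1) {T : Finset (Fin n)} {t : Fin n}
    (ht0 : t ∈ T) (ht1 : t + 1 ∈ T) (htm : t - 1 ∉ T) (ht2 : t + 2 ∉ T)
    (hall : ∀ x : Fin n, x ≠ t → x ≠ t - 1 → wcnt T x = 1) :
    T = ofOffs t (OA n) := by
  have h3m := h3m_1 hn h1
  have hchain := chain_gen hn (T := T) (t := t) (r := 1) (jmax := n - 2)
    (by omega) (by omega)
    (fun j h3j hj => hall _ (add_cast_ne hn t (by omega) (by omega))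
      (add_cast_ne_sub_one hn t (by omega)))
    (by rw [Nat.cast_one]; exact iff_of_true ht1 rfl)
    (by rw [Nat.cast_ofNat]; exact iff_of_false ht2 (by norm_num))
  ext x
  rw [mem_ofOffs (OA_sub hn h1), mem_OA hn h1]
  set v := (x - t).val with hvdef
  have hvlt : v < n := (x - t).isLt
  have hx : x = t + ((v : ℕ) : Fin n) := by
    rw [hvdef, Fin.cast_val_eq_self]; ring
  by_cases hv0 : v = 0
  · have hxt : x = t := by
      have h0 : x - t = 0 := Fin.ext (by rw [Fin.val_zero]; exact hv0)
      exact sub_eq_zero.mp h0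
    exact ⟨fun _ => Or.inl hv0, fun _ => by rw [hxt]; exact ht0⟩
  by_cases hvn : v = n - 1
  · have hxm : x = t - 1 := by
      rw [hx, hvn, cast_n_sub_one hn]; ring
    rw [hxm]
    constructor
    · intro h; exact absurd h htm
    · intro h; omega
  · have hmem := hchain v (by omega) (by omega)
    rw [← hx] at hmem
    rw [hmem]
    omega

lemma caseB_conclude (hn : 3 ≤ n) (h1 : n % 3 = 1) {T : Finset (Fin n)} {x0 x1 : Fin n}
    (hne : x0 ≠ x1)
    (p0 : x0 ∈ T ∧ x0 + 1 ∉ T ∧ x0 + 2 ∈ T)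
    (p1 : x1 ∈ T ∧ x1 + 1 ∉ T ∧ x1 + 2 ∈ T)
    (hall : ∀ x : Fin n, x ≠ x0 → x ≠ x1 → wcnt T x = 1) :
    ∃ u : Fin n, ∃ j, j ≤ mm n - 2 ∧ T = ofOffs u (OB n j) := by
  have h3m := h3m_1 hn h1
  set D := (x1 - x0).val with hDdef
  have hDlt : D < n := (x1 - x0).isLt
  have hx1v : x1 = x0 + ((D : ℕ) : Fin n) := by
    rw [hDdef, Fin.cast_val_eq_self]; ring
  have hD0 : D ≠ 0 := by
    intro h
    exact hne (sub_eq_zero.mp (Fin.ext (by rw [Fin.val_zero]; exact h)) : x1 = x0).symm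
  have hD1 : D ≠ 1 := by
    intro h
    apply p0.2.1
    rw [show x0 + 1 = x1 from by rw [hx1v, h, Nat.cast_one]]
    exact p1.1
  have chain1 := chain_gen hn (T := T) (t := x0) (r := 2) (jmax := D)
    (by omega) hDlt
    (fun j h3j hj => hall _ (add_cast_ne hn x0 (by omega) (by omega))
      (by
        rw [hx1v]
        intro h
        have h2 := add_left_cancel h
        have h3 := (cast_inj' (show j - 2 < n by omega) hDlt).mp h2
        omega))
    (by rw [Nat.cast_one]; exact iff_of_false p0.2.1 (by norm_num))
    (by rw [Nat.cast_ofNat]; exact iff_of_true p0.2.2 rfl)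
  have hD3 : D % 3 = 2 := by
    refine (chain1 D (by omega) le_rfl).mp ?_
    rw [← hx1v]; exact p1.1
  set D' := (x0 - x1).val with hD'def
  have hDD' : D + D' = n := by
    have := sub_val_add_sub_val (a := x1) (b := x0) hne.symm
    omega
  have hx0v : x0 = x1 + ((D' : ℕ) : Fin n) := by
    rw [hD'def, Fin.cast_val_eq_self]; ring
  have chain2 := chain_gen hn (T := T) (t := x1) (r := 2) (jmax := D' - 1)
    (by omega) (by omega)
    (fun j h3j hj => hall _
      (by
        rw [hx0v]
        intro h
        have h2 := add_left_cancel h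
        have h3 := (cast_inj' (show j - 2 < n by omega) (show D' < n by omega)).mp h2
        omega)
      (add_cast_ne hn x1 (by omega) (by omega)))
    (by rw [Nat.cast_one]; exact iff_of_false p1.2.1 (by norm_num))
    (by rw [Nat.cast_ofNat]; exact iff_of_true p1.2.2 rfl)
  refine ⟨x0, (D - 2) / 3, by omega, ?_⟩
  have hDj : 2 + 3 * ((D - 2) / 3) = D := by omega
  ext x
  rw [mem_ofOffs (OB_sub hn h1 (by omega)), mem_OB hn h1 (by omega)]
  rw [hDj]
  set v := (x - x0).val with hvdef
  have hvlt : v < n := (x - x0).isLt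
  have hx : x = x0 + ((v : ℕ) : Fin n) := by
    rw [hvdef, Fin.cast_val_eq_self]; ring
  by_cases hv0 : v = 0
  · have hxt : x = x0 := by
      have h0 : x - x0 = 0 := Fin.ext (by rw [Fin.val_zero]; exact hv0)
      exact sub_eq_zero.mp h0
    exact ⟨fun _ => Or.inl hv0, fun _ => by rw [hxt]; exact p0.1⟩
  by_cases hvD : v ≤ D
  · have hmem := chain1 v (by omega) hvD
    rw [← hx] at hmem
    rw [hmem]
    omega
  · -- v > D : express x relative to x1
    set w := v - D with hwdef
    have hxw : x = x1 + ((w : ℕ) : Fin n) := by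
      rw [hx, hx1v, add_assoc, ← Nat.cast_add, show D + w = v from by omega]
    have hmem := chain2 w (by omega) (by omega)
    rw [← hxw] at hmem
    rw [hmem]
    omega

lemma minCov1_struct (hn : 3 ≤ n) (h1 : n % 3 = 1) {T : Finset (Fin n)} (hT : MinCov T) :
    (∃ t, T = ofOffs t (OA n)) ∨ (∃ u, ∃ j, j ≤ mm n - 2 ∧ T = ofOffs u (OB n j)) := by
  have h3m := h3m_1 hn h1
  have hsum : ∑ x ∈ (univ : Finset (Fin n)), wcnt T x = (univ : Finset (Fin n)).card + 2 := by
    rw [minCov_wcnt_sum hn hT, card_univ_fin]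
    omega
  rcases sum_eq_card_add_two_struct (fun y _ => wcnt_pos_of_cov hT.1 hn y) hsum with
    ⟨x0, -, hw3, hrest⟩ | ⟨x0, -, x1, -, hne, hw0, hw1, hrest⟩
  · -- a window of count 3 is impossible
    exfalso
    have hall : ∀ x : Fin n, x ≠ x0 → wcnt T x = 1 := fun x hx => hrest x (mem_univ x) hx
    have hw := wcnt_eq hn T x0
    rw [hw3] at hw
    have m012 : x0 ∈ T ∧ x0 + 1 ∈ T ∧ x0 + 2 ∈ T := by
      by_cases m0 : x0 ∈ T <;> by_cases m1 : x0 + 1 ∈ T <;> by_cases m2 : x0 + 2 ∈ T <;>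
        simp only [m0, m1, m2, ite_true, ite_false] at hw <;>
        first
        | exact ⟨m0, m1, m2⟩
        | omega
    have hw' := wcnt_eq hn T (x0 + 1)
    rw [hall (x0 + 1) (self_ne_add_one hn x0).symm,
      show x0 + 1 + 1 = x0 + 2 by ring] at hw'
    simp only [m012.2.1, m012.2.2, ite_true] at hw'
    split_ifs at hw' <;> omega
  · have hall : ∀ x : Fin n, x ≠ x0 → x ≠ x1 → wcnt T x = 1 :=
      fun x hx hx' => hrest x (mem_univ x) hx hx'
    have tri : ∀ y z : Fin n, y ≠ z → wcnt T y = 2 → wcnt T z = 2 →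
        (∀ x : Fin n, x ≠ y → x ≠ z → wcnt T x = 1) →
        (z = y - 1 ∧ y ∈ T ∧ y + 1 ∈ T ∧ y + 2 ∉ T) ∨
        (z = y + 1 ∧ y ∉ T ∧ y + 1 ∈ T ∧ y + 2 ∈ T) ∨
        (y ∈ T ∧ y + 1 ∉ T ∧ y + 2 ∈ T) := by
      intro y z hyz hwy hwz hall'
      have hw := wcnt_eq hn T y
      rw [hwy] at hw
      by_cases m0 : y ∈ T <;> by_cases m1 : y + 1 ∈ T <;> by_cases m2 : y + 2 ∈ T
      · exfalso; simp only [m0, m1, m2, ite_true] at hw; omega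
      · -- (1,1,0) : z = y - 1
        left
        refine ⟨?_, m0, m1, m2⟩
        by_contra hzy
        have hw' := wcnt_eq hn T (y - 1)
        rw [hall' (y - 1) (sub_one_ne hn y) (fun h => hzy h.symm),
          show y - 1 + 1 = y by ring, show y - 1 + 2 = y + 1 by ring] at hw'
        simp only [m0, m1, ite_true] at hw'
        split_ifs at hw' <;> omega
      · -- (1,0,1)
        right; right; exact ⟨m0, m1, m2⟩
      · exfalso; simp only [m0, m1, m2, ite_true, ite_false] at hw; omega
      · -- (0,1,1) : z = y + 1
        right; left
        refine ⟨?_, m0, m1, m2⟩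
        by_contra hzy
        have hw' := wcnt_eq hn T (y + 1)
        rw [hall' (y + 1) (self_ne_add_one hn y).symm (fun h => hzy h.symm),
          show y + 1 + 1 = y + 2 by ring] at hw'
        simp only [m1, m2, ite_true] at hw'
        split_ifs at hw' <;> omega
      · exfalso; simp only [m0, m1, m2, ite_true, ite_false] at hw; omega
      · exfalso; simp only [m0, m1, m2, ite_true, ite_false] at hw; omega
      · exfalso; simp only [m0, m1, m2, ite_true, ite_false] at hw; omega
    rcases tri x0 x1 hne hw0 hw1 hall with ⟨hz, a0, a1, a2⟩ | ⟨hz, b0, b1, b2⟩ | pc0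
    · -- x1 = x0 - 1, adjacent pair x0, x0+1
      left
      have hw1' : wcnt T (x0 - 1) = 2 := by rw [← hz]; exact hw1
      have htm : x0 - 1 ∉ T := by
        have hw' := wcnt_eq hn T (x0 - 1)
        rw [hw1', show x0 - 1 + 1 = x0 by ring, show x0 - 1 + 2 = x0 + 1 by ring] at hw'
        simp only [a0, a1, ite_true] at hw'
        intro hc
        rw [if_pos hc] at hw'
        omega
      exact ⟨x0, caseA_conclude hn h1 a0 a1 htm a2
        (fun x hx hx' => hall x hx (by rw [hz]; exact hx'))⟩
    · -- x1 = x0 + 1, adjacent pair x1, x1+1 with t := x1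
      left
      have hx1T : x1 ∈ T := by rw [hz]; exact b1
      have hx1p : x1 + 1 ∈ T := by rw [hz, show x0 + 1 + 1 = x0 + 2 by ring]; exact b2
      have hx1m : x1 - 1 ∉ T := by rw [hz, show x0 + 1 - 1 = x0 by ring]; exact b0
      have ht2 : x1 + 2 ∉ T := by
        have hw' := wcnt_eq hn T x1
        rw [hw1] at hw'
        simp only [hx1T, hx1p, ite_true] at hw'
        intro hc
        rw [if_pos hc] at hw'
        omega
      have hx10 : x1 - 1 = x0 := by rw [hz]; ring
      exact ⟨x1, caseA_conclude hn h1 hx1T hx1p hx1m ht2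
        (fun x hx hx' => hall x (fun h => hx' (by rw [h, ← hx10])) hx)⟩
    · rcases tri x1 x0 hne.symm hw1 hw0 (fun x hx hx' => hall x hx' hx) with
        ⟨hz, a0, a1, a2⟩ | ⟨hz, b0, b1, b2⟩ | pc1
      · exfalso
        apply pc0.2.1
        rw [show x0 + 1 = x1 from by rw [hz]; ring]
        exact a0
      · exfalso
        apply pc0.2.1
        rw [show x0 + 1 = x1 + 2 from by rw [hz]; ring]
        exact b2
      · exact Or.inr (caseB_conclude hn h1 hne pc0 pc1 hall)

end Case1b

section Case1c
variable [NeZero n]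

lemma gapstart_iff (hn : 3 ≤ n) (h1 : n % 3 = 1) {j : ℕ} (hj : j ≤ mm n - 2) (u w : Fin n) :
    (w ∈ ofOffs u (OB n j) ∧ w + ((1 : ℕ) : Fin n) ∉ ofOffs u (OB n j) ∧
      w + ((2 : ℕ) : Fin n) ∈ ofOffs u (OB n j)) ↔
    ((w - u).val = 0 ∨ (w - u).val = 2 + 3 * j) := by
  have h3m := h3m_1 hn h1
  rw [mem_ofOffs (OB_sub hn h1 hj), mem_ofOffs (OB_sub hn h1 hj),
    mem_ofOffs (OB_sub hn h1 hj), mem_OB hn h1 hj, mem_OB hn h1 hj, mem_OB hn h1 hj,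
    show w + ((1 : ℕ) : Fin n) - u = (w - u) + ((1 : ℕ) : Fin n) from by ring, add_cast_val,
    show w + ((2 : ℕ) : Fin n) - u = (w - u) + ((2 : ℕ) : Fin n) from by ring, add_cast_val]
  set v := (w - u).val with hvdef
  have hv : v < n := (w - u).isLt
  rcases show v ≤ n - 3 ∨ v = n - 2 ∨ v = n - 1 by omega with h | h | h
  · rw [Nat.mod_eq_of_lt (show v + 1 < n by omega),
      Nat.mod_eq_of_lt (show v + 2 < n by omega)]
    omega
  · rw [Nat.mod_eq_of_lt (show v + 1 < n by omega), show v + 2 = n by omega, Nat.mod_self]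
    omega
  · rw [show v + 1 = n by omega, Nat.mod_self, show v + 2 = n + 1 by omega,
      Nat.add_mod_left, Nat.mod_eq_of_lt (show 1 < n by omega)]
    omega

lemma cast_self_gap {j : ℕ} (hn : 3 ≤ n) (hlt : 2 + 3 * j < n) (u' : Fin n) :
    ((u' + ((2 + 3 * j : ℕ) : Fin n)) - u').val = 2 + 3 * j := by
  rw [show u' + ((2 + 3 * j : ℕ) : Fin n) - u' = ((2 + 3 * j : ℕ) : Fin n) from by ring,
    Fin.val_natCast, Nat.mod_eq_of_lt hlt]

lemma OB_fiber (hn : 3 ≤ n) (h1 : n % 3 = 1) {j j' : ℕ} (hj : j ≤ mm n - 2)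
    (hj' : j' ≤ mm n - 2) {u u' : Fin n}
    (hab : ofOffs u' (OB n j') = ofOffs u (OB n j)) :
    (u' = u ∧ j' = j) ∨ (u' = u + ((2 + 3 * j : ℕ) : Fin n) ∧ j' = mm n - 2 - j) := by
  have h3m := h3m_1 hn h1
  have hlt' : 2 + 3 * j' < n := by omega
  have hlt : 2 + 3 * j < n := by omega
  have g1 : (u' - u).val = 0 ∨ (u' - u).val = 2 + 3 * j := by
    have hg := (gapstart_iff hn h1 hj' u' u').mpr (Or.inl (by simp))
    rw [hab] at hg
    exact (gapstart_iff hn h1 hj u u').mp hg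
  have g2 : ((u' + ((2 + 3 * j' : ℕ) : Fin n)) - u).val = 0 ∨
      ((u' + ((2 + 3 * j' : ℕ) : Fin n)) - u).val = 2 + 3 * j := by
    have hg := (gapstart_iff hn h1 hj' u' (u' + ((2 + 3 * j' : ℕ) : Fin n))).mpr
      (Or.inr (cast_self_gap hn hlt' u'))
    rw [hab] at hg
    exact (gapstart_iff hn h1 hj u _).mp hg
  rcases g1 with h | h
  · left
    have huu : u' = u := sub_eq_zero.mp (Fin.ext (by simpa using h))
    subst huu
    have hval := cast_self_gap hn hlt' u'
    rcases g2 with h2 | h2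
    · rw [hval] at h2; omega
    · rw [hval] at h2; omega
  · right
    have hu' : u' = u + ((2 + 3 * j : ℕ) : Fin n) := by
      have hval : u' - u = ((2 + 3 * j : ℕ) : Fin n) :=
        Fin.ext (by rw [h, Fin.val_natCast, Nat.mod_eq_of_lt hlt])
      rw [← hval]; ring
    refine ⟨hu', ?_⟩
    have he : u' + ((2 + 3 * j' : ℕ) : Fin n) - u
        = ((2 + 3 * j : ℕ) : Fin n) + ((2 + 3 * j' : ℕ) : Fin n) := by
      rw [hu']; ring
    rw [he, ← Nat.cast_add, Fin.val_natCast] at g2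
    rcases Nat.lt_or_ge (2 + 3 * j + (2 + 3 * j')) n with hc | hc
    · rw [Nat.mod_eq_of_lt hc] at g2; omega
    · rw [Nat.mod_eq_sub_mod hc, Nat.mod_eq_of_lt (by omega)] at g2; omega

lemma OB_rot (hn : 3 ≤ n) (h1 : n % 3 = 1) {j : ℕ} (hj : j ≤ mm n - 2) (u : Fin n) :
    ofOffs (u + ((2 + 3 * j : ℕ) : Fin n)) (OB n (mm n - 2 - j)) = ofOffs u (OB n j) := by
  have h3m := h3m_1 hn h1
  have hj2 : mm n - 2 - j ≤ mm n - 2 := by omega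
  ext x
  rw [mem_ofOffs (OB_sub hn h1 hj2), mem_ofOffs (OB_sub hn h1 hj),
    mem_OB hn h1 hj2, mem_OB hn h1 hj,
    show x - (u + ((2 + 3 * j : ℕ) : Fin n)) = (x - u) - ((2 + 3 * j : ℕ) : Fin n) from by ring,
    sub_val_eq, Fin.val_natCast, Nat.mod_eq_of_lt (show 2 + 3 * j < n by omega)]
  set v := (x - u).val with hvdef
  have hv : v < n := (x - u).isLt
  rcases Nat.lt_or_ge v (2 + 3 * j) with hc | hc
  · rw [Nat.mod_eq_of_lt (by omega)]
    omega
  · rw [show v + (n - (2 + 3 * j)) = n + (v - (2 + 3 * j)) by omega, Nat.add_mod_left,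
      Nat.mod_eq_of_lt (by omega)]
    omega

lemma OB_fiber_card (hn : 3 ≤ n) (h1 : n % 3 = 1) {u : Fin n} {j : ℕ} (hjm : j < mm n - 1) :
    (((univ : Finset (Fin n)) ×ˢ range (mm n - 1)).filter
      (fun p : Fin n × ℕ => ofOffs p.1 (OB n p.2) = ofOffs u (OB n j))).card = 2 := by
  classical
  have h3m := h3m_1 hn h1
  have hj : j ≤ mm n - 2 := by omega
  have hlt : 2 + 3 * j < n := by omega
  have hset : (((univ : Finset (Fin n)) ×ˢ range (mm n - 1)).filter
      (fun p : Fin n × ℕ => ofOffs p.1 (OB n p.2) = ofOffs u (OB n j)))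
      = {(u, j), (u + ((2 + 3 * j : ℕ) : Fin n), mm n - 2 - j)} := by
    ext ⟨u', j'⟩
    simp only [mem_filter, Finset.mem_product, mem_univ, mem_range, true_and,
      mem_insert, mem_singleton, Prod.mk.injEq]
    constructor
    · rintro ⟨hj', hab⟩
      rcases OB_fiber hn h1 hj (by omega) hab with ⟨e1, e2⟩ | ⟨e1, e2⟩
      · exact Or.inl ⟨e1, e2⟩
      · exact Or.inr ⟨e1, e2⟩
    · rintro (⟨rfl, rfl⟩ | ⟨rfl, rfl⟩)
      · exact ⟨hjm, rfl⟩
      · exact ⟨by omega, OB_rot hn h1 hj u⟩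
  rw [hset, card_insert_of_notMem, card_singleton]
  rw [mem_singleton]
  intro hmem
  exact add_cast_ne hn u (by omega) hlt (congrArg Prod.fst hmem).symm

lemma Bimg_card (hn : 3 ≤ n) (h1 : n % 3 = 1) :
    2 * ((((univ : Finset (Fin n)) ×ˢ range (mm n - 1)).image
      (fun p : Fin n × ℕ => ofOffs p.1 (OB n p.2))).card) = n * (mm n - 1) := by
  classical
  have hsum := Finset.card_eq_sum_card_image
    (fun p : Fin n × ℕ => ofOffs p.1 (OB n p.2)) ((univ : Finset (Fin n)) ×ˢ range (mm n - 1))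
  have hP : (((univ : Finset (Fin n)) ×ˢ range (mm n - 1))).card = n * (mm n - 1) := by
    rw [Finset.card_product, card_univ_fin, card_range]
  have hfib : ∀ b ∈ (((univ : Finset (Fin n)) ×ˢ range (mm n - 1)).image
      (fun p : Fin n × ℕ => ofOffs p.1 (OB n p.2))),
      ((((univ : Finset (Fin n)) ×ˢ range (mm n - 1)).filter
        (fun p : Fin n × ℕ => ofOffs p.1 (OB n p.2) = b)).card) = 2 := by
    intro b hb
    rcases mem_image.mp hb with ⟨⟨u, j⟩, hp, rfl⟩
    have hjm : j < mm n - 1 := by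
      have := (Finset.mem_product.mp hp).2
      rwa [mem_range] at this
    exact OB_fiber_card hn h1 hjm
  rw [Finset.sum_congr rfl hfib, Finset.sum_const, smul_eq_mul] at hsum
  rw [hP] at hsum
  omega

lemma OA_inj (hn : 3 ≤ n) (h1 : n % 3 = 1) :
    Function.Injective (fun t : Fin n => ofOffs t (OA n)) := by
  intro a b hab
  simp only at hab
  have h3m := h3m_1 hn h1
  have hb0 : b ∈ ofOffs a (OA n) := by
    rw [hab, mem_ofOffs (OA_sub hn h1), mem_OA hn h1]
    left; simp
  have hb1 : b + ((1 : ℕ) : Fin n) ∈ ofOffs a (OA n) := by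
    rw [hab, mem_ofOffs (OA_sub hn h1), mem_OA hn h1,
      show b + ((1 : ℕ) : Fin n) - b = ((1 : ℕ) : Fin n) from by ring,
      Fin.val_natCast, Nat.mod_eq_of_lt (by omega)]
    omega
  rw [mem_ofOffs (OA_sub hn h1), mem_OA hn h1] at hb0
  rw [mem_ofOffs (OA_sub hn h1), mem_OA hn h1,
    show b + ((1 : ℕ) : Fin n) - a = (b - a) + ((1 : ℕ) : Fin n) from by ring,
    add_cast_val] at hb1
  set v := (b - a).val with hvdef
  have hv : v < n := (b - a).isLt
  have hv0 : v = 0 := by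
    rcases hb0 with h | h
    · exact h
    · exfalso
      rw [Nat.mod_eq_of_lt (show v + 1 < n by omega)] at hb1
      omega
  exact (sub_eq_zero.mp (Fin.ext (by rw [Fin.val_zero]; exact hv0))).symm

lemma AB_disj (hn : 3 ≤ n) (h1 : n % 3 = 1) {t u : Fin n} {j : ℕ} (hj : j ≤ mm n - 2) :
    ofOffs t (OA n) ≠ ofOffs u (OB n j) := by
  intro hab
  have h3m := h3m_1 hn h1
  have ht0 : t ∈ ofOffs t (OA n) := by
    rw [mem_ofOffs (OA_sub hn h1), mem_OA hn h1]; left; simp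
  have ht1 : t + ((1 : ℕ) : Fin n) ∈ ofOffs t (OA n) := by
    rw [mem_ofOffs (OA_sub hn h1), mem_OA hn h1,
      show t + ((1 : ℕ) : Fin n) - t = ((1 : ℕ) : Fin n) from by ring,
      Fin.val_natCast, Nat.mod_eq_of_lt (by omega)]
    omega
  rw [hab, mem_ofOffs (OB_sub hn h1 hj), mem_OB hn h1 hj] at ht0
  rw [hab, mem_ofOffs (OB_sub hn h1 hj), mem_OB hn h1 hj,
    show t + ((1 : ℕ) : Fin n) - u = (t - u) + ((1 : ℕ) : Fin n) from by ring,
    add_cast_val] at ht1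
  set v := (t - u).val with hvdef
  have hv : v < n := (t - u).isLt
  have hvb : v ≤ n - 2 := by omega
  rw [Nat.mod_eq_of_lt (show v + 1 < n by omega)] at ht1
  omega

lemma case1 (hn : 3 ≤ n) (h1 : n % 3 = 1) :
    numMaxDissoc (SimpleGraph.cycleGraph n) = n * (n + 5) / 6 := by
  classical
  have h3m := h3m_1 hn h1
  set Aimg := (univ : Finset (Fin n)).image (fun t => ofOffs t (OA n)) with hA
  set Bimg := (((univ : Finset (Fin n)) ×ˢ range (mm n - 1)).image
    (fun p : Fin n × ℕ => ofOffs p.1 (OB n p.2))) with hB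
  have hiff : ∀ T, MinCov T ↔ T ∈ Aimg ∪ Bimg := by
    intro T
    constructor
    · intro hT
      rcases minCov1_struct hn h1 hT with ⟨t, rfl⟩ | ⟨u, j, hj, rfl⟩
      · exact mem_union_left _ (mem_image.mpr ⟨t, mem_univ t, rfl⟩)
      · refine mem_union_right _ (mem_image.mpr ⟨(u, j), ?_, rfl⟩)
        rw [Finset.mem_product, mem_range]
        exact ⟨mem_univ u, by omega⟩
    · intro hT
      rcases mem_union.mp hT with h | h
      · rcases mem_image.mp h with ⟨t, -, rfl⟩
        exact minCov_OA hn h1 t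
      · rcases mem_image.mp h with ⟨⟨u, j⟩, hp, rfl⟩
        have hj : j ≤ mm n - 2 := by
          have := (Finset.mem_product.mp hp).2
          rw [mem_range] at this
          omega
        exact minCov_OB hn h1 hj u
  have hdisj : Disjoint Aimg Bimg := by
    rw [disjoint_left]
    intro S hSA hSB
    rcases mem_image.mp hSA with ⟨t, -, rfl⟩
    rcases mem_image.mp hSB with ⟨⟨u, j⟩, hp, he⟩
    have hj : j ≤ mm n - 2 := by
      have := (Finset.mem_product.mp hp).2
      rw [mem_range] at this
      omega
    exact AB_disj hn h1 hj he.symm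
  rw [numMaxDissoc_eq_card hn _ hiff, card_union_of_disjoint hdisj,
    card_image_of_injective _ (OA_inj hn h1), card_univ_fin]
  have h2B := Bimg_card hn h1
  rw [← hB] at h2B
  set q := mm n - 1 with hq
  have hnq : n = 3 * q + 1 := by omega
  symm
  apply Nat.div_eq_of_eq_mul_left (by norm_num)
  calc n * (n + 5) = (3 * q + 1) * ((3 * q + 1) + 5) := by rw [← hnq]
    _ = (3 * q + 1) * 6 + 3 * ((3 * q + 1) * q) := by ring
    _ = n * 6 + 3 * (n * q) := by rw [← hnq]
    _ = n * 6 + 3 * (2 * Bimg.card) := by rw [h2B]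
    _ = (n + Bimg.card) * 6 := by ring

end Case1c

end CycP

theorem numMaxDissoc_cycleGraph (n : ℕ) (hn : 3 ≤ n) :
    (n % 3 = 0 → numMaxDissoc (SimpleGraph.cycleGraph n) = 3) ∧
    (n % 3 = 1 → numMaxDissoc (SimpleGraph.cycleGraph n) = n * (n + 5) / 6) ∧
    (n % 3 = 2 → numMaxDissoc (SimpleGraph.cycleGraph n) = n) := by
  haveI : NeZero n := ⟨by omega⟩
  exact ⟨fun h => CycP.case0 hn h, fun h => CycP.case1 hn h, fun h => CycP.case2 hn h⟩
end

section
/- Let k ≥ 3 with k ≡ 0 (mod 3), and let u be a vertex of the cycle graph C_k. Then the number of maximum dissociation sets of C_k not containing u is 1, the number of maximum dissociation sets containing u with u of degree 1 in the induced subgraph is 2, and the number of maximum dissociation sets containing u with u of degree 0 in the induced subgraph is 0. -/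
open scoped Classical

variable {V : Type*}

section
open Finset SimpleGraph
open Fin.CommRing Fin.NatCast
variable {n : ℕ}

lemma adj_iff {u v : Fin (n+3)} :
    (cycleGraph (n+3)).Adj u v ↔ v = u + 1 ∨ v = u - 1 := by
  rw [show (n+3) = (n+1)+2 by ring] at *
  rw [cycleGraph_adj]
  constructor
  · rintro (h | h)
    · right; rw [eq_sub_iff_add_eq, ← h]; ring
    · left; rw [← h]; ring
  · rintro (h | h)
    · right; rw [h]; ring
    · left; rw [h]; ring

lemma fin_two_ne_zero : (2 : Fin (n+3)) ≠ 0 := by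
  have : ((2 : Fin (n+3)) : ℕ) = 2 := by rw [Fin.val_two]
  intro h; rw [h] at this; simp at this

lemma succ_ne_pred (u : Fin (n+3)) : u + 1 ≠ u - 1 := by
  intro h
  apply fin_two_ne_zero (n := n)
  have := sub_eq_zero_of_eq h
  rw [show u + 1 - (u - 1) = 2 by ring] at this
  exact this


lemma nbrCount_eq (s : Finset (Fin (n+3))) (u : Fin (n+3)) :
    nbrCount (cycleGraph (n+3)) s u
      = (if u + 1 ∈ s then 1 else 0) + (if u - 1 ∈ s then 1 else 0) := by
  have hset : {w ∈ (s : Set (Fin (n+3))) | (cycleGraph (n+3)).Adj u w}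
      = ↑(s ∩ {u + 1, u - 1}) := by
    ext w
    simp only [Set.mem_setOf_eq, Finset.coe_inter, Set.mem_inter_iff, Finset.mem_coe,
      Finset.mem_insert, Finset.mem_singleton, adj_iff]
  rw [nbrCount, hset, Set.ncard_coe_finset]
  by_cases h1 : u + 1 ∈ s <;> by_cases h2 : u - 1 ∈ s
  · have : s ∩ {u+1, u-1} = {u+1, u-1} := by
      ext w
      simp only [Finset.mem_inter, Finset.mem_insert, Finset.mem_singleton,
        and_iff_right_iff_imp]
      rintro (rfl|rfl) <;> assumption
    rw [this, Finset.card_pair (succ_ne_pred u)]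
    simp [h1, h2]
  · have : s ∩ {u+1, u-1} = {u+1} := by
      ext w
      simp only [Finset.mem_inter, Finset.mem_insert, Finset.mem_singleton]
      constructor
      · rintro ⟨hw, rfl|rfl⟩
        · rfl
        · exact absurd hw h2
      · rintro rfl; exact ⟨h1, Or.inl rfl⟩
    rw [this]
    simp [h1, h2]
  · have : s ∩ {u+1, u-1} = {u-1} := by
      ext w
      simp only [Finset.mem_inter, Finset.mem_insert, Finset.mem_singleton]
      constructor
      · rintro ⟨hw, rfl|rfl⟩
        · exact absurd hw h1
        · rfl
      · rintro rfl; exact ⟨h2, Or.inr rfl⟩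
    rw [this]
    simp [h1, h2]
  · have : s ∩ {u+1, u-1} = ∅ := by
      ext w
      simp only [Finset.mem_inter, Finset.mem_insert, Finset.mem_singleton,
        Finset.notMem_empty, iff_false, not_and]
      rintro hw (rfl|rfl)
      · exact h1 hw
      · exact h2 hw
    rw [this]
    simp [h1, h2]

lemma fin_one_ne_zero' : (1 : Fin (n+3)) ≠ 0 := by
  have : ((1 : Fin (n+3)) : ℕ) = 1 := rfl
  intro h; rw [h] at this; simp at this

lemma add_one_ne (i : Fin (n+3)) : i + 1 ≠ i := by
  simp [fin_one_ne_zero']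

lemma add_two_ne (i : Fin (n+3)) : i + 2 ≠ i := by
  simp [fin_two_ne_zero]

lemma add_one_ne_add_two (i : Fin (n+3)) : i + 1 ≠ i + 2 := by
  intro h
  have := add_left_cancel h
  have h2 : ((1 : Fin (n+3)) : ℕ) = ((2 : Fin (n+3)) : ℕ) := by rw [this]
  rw [Fin.val_two] at h2
  simp at h2

/-- window -/
def W (i : Fin (n+3)) : Finset (Fin (n+3)) := {i, i + 1, i + 2}

lemma card_W (i : Fin (n+3)) : (W i).card = 3 := by
  rw [W, Finset.card_insert_of_notMem, Finset.card_pair]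
  · exact fun h => add_one_ne_add_two i h
  · simp only [Finset.mem_insert, Finset.mem_singleton]
    push_neg
    exact ⟨fun h => add_one_ne i h.symm, fun h => add_two_ne i h.symm⟩

lemma window_bound {s : Finset (Fin (n+3))} (hs : IsDissoc (cycleGraph (n+3)) s)
    (i : Fin (n+3)) : (s ∩ W i).card ≤ 2 := by
  by_contra h
  push_neg at h
  have h3 : (W i).card ≤ (s ∩ W i).card := by rw [card_W]; omega
  have heq : W i = s ∩ W i := (Finset.eq_of_subset_of_card_le (Finset.inter_subset_right) h3).symm
  have hmem : ∀ w ∈ W i, w ∈ s := by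
    intro w hw; rw [heq] at hw; exact (Finset.mem_inter.1 hw).1
  have h1 : i ∈ s := hmem i (by simp [W])
  have h2 : i + 2 ∈ s := hmem (i + 2) (by simp [W])
  have hb := hs (i + 1) (hmem (i + 1) (by simp [W]))
  rw [nbrCount_eq] at hb
  rw [show i + 1 + 1 = i + 2 by ring, show i + 1 - 1 = i by ring] at hb
  simp [h1, h2] at hb

lemma sub_one_ne (j : Fin (n+3)) : j - 1 ≠ j := by
  intro h
  exact fin_one_ne_zero' (n := n) (by have := sub_eq_zero_of_eq h; rw [show j - 1 - j = -1 by ring] at this; rw [← neg_zero, ← this]; ring)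

lemma sub_two_ne (j : Fin (n+3)) : j - 2 ≠ j := by
  intro h
  exact fin_two_ne_zero (n := n) (by have := sub_eq_zero_of_eq h; rw [show j - 2 - j = -2 by ring] at this; rw [← neg_zero, ← this]; ring)

lemma sub_one_ne_sub_two (j : Fin (n+3)) : j - 1 ≠ j - 2 := by
  intro h
  have h2 : (1 : Fin (n+3)) = 2 := by
    have := congrArg (fun x => j - x) h
    simpa using this
  have h3 : ((1 : Fin (n+3)) : ℕ) = ((2 : Fin (n+3)) : ℕ) := by rw [h2]
  rw [Fin.val_two] at h3
  simp at h3

lemma window_sum (s : Finset (Fin (n+3))) :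
    ∑ i : Fin (n+3), (s ∩ W i).card = 3 * s.card := by
  have h1 : ∀ i, (s ∩ W i).card = ∑ j ∈ s, if j ∈ W i then 1 else 0 := by
    intro i
    rw [← Finset.filter_mem_eq_inter, Finset.card_filter]
  simp_rw [h1]
  rw [Finset.sum_comm]
  have h2 : ∀ j : Fin (n+3), ∑ i : Fin (n+3), (if j ∈ W i then 1 else 0) = 3 := by
    intro j
    rw [← Finset.card_filter]
    have : Finset.univ.filter (fun i => j ∈ W i) = {j, j - 1, j - 2} := by
      ext i
      simp only [Finset.mem_filter, Finset.mem_univ, true_and, W, Finset.mem_insert,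
        Finset.mem_singleton]
      constructor
      · rintro (rfl | h | h)
        · exact Or.inl rfl
        · right; left; rw [h]; ring
        · right; right; rw [h]; ring
      · rintro (rfl | rfl | rfl)
        · exact Or.inl rfl
        · right; left; ring
        · right; right; ring
    rw [this, Finset.card_insert_of_notMem, Finset.card_pair (sub_one_ne_sub_two j)]
    simp only [Finset.mem_insert, Finset.mem_singleton]
    push_neg
    exact ⟨fun h => sub_one_ne j h.symm, fun h => sub_two_ne j h.symm⟩
  simp_rw [h2]
  rw [Finset.sum_const, smul_eq_mul, mul_comm]

lemma mod3_add_one (hd : 3 ∣ (n+3)) (i : Fin (n+3)) :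
    ((i + 1 : Fin (n+3)) : ℕ) % 3 = (i.val + 1) % 3 := by
  have h1 : ((1 : Fin (n+3)) : ℕ) = 1 := rfl
  rw [Fin.val_add, h1, Nat.mod_mod_of_dvd _ hd]

lemma mod3_sub_one (hd : 3 ∣ (n+3)) (i : Fin (n+3)) :
    ((i - 1 : Fin (n+3)) : ℕ) % 3 = (i.val + 2) % 3 := by
  have h := mod3_add_one hd (i - 1)
  rw [sub_add_cancel] at h
  omega

/-- the candidate maximum dissociation sets -/
def Sres (r : ℕ) : Finset (Fin (n+3)) := Finset.univ.filter (fun i => i.val % 3 ≠ r)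

lemma mem_Sres {r : ℕ} {i : Fin (n+3)} : i ∈ Sres r ↔ i.val % 3 ≠ r := by
  simp [Sres]

lemma nbrCount_Sres (hd : 3 ∣ (n+3)) {r : ℕ} (hr : r < 3) {u : Fin (n+3)}
    (hu : u ∈ (Sres r : Finset (Fin (n+3)))) :
    nbrCount (cycleGraph (n+3)) (Sres r) u = 1 := by
  rw [mem_Sres] at hu
  rw [nbrCount_eq]
  simp only [mem_Sres, mod3_add_one hd, mod3_sub_one hd]
  split_ifs <;> omega

lemma isDissoc_Sres (hd : 3 ∣ (n+3)) {r : ℕ} (hr : r < 3) :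
    IsDissoc (cycleGraph (n+3)) (Sres r) := by
  intro v hv
  rw [nbrCount_Sres hd hr hv]

lemma card_class (hd : 3 ∣ (n+3)) {r : ℕ} (hr : r < 3) :
    (Finset.univ.filter (fun i : Fin (n+3) => i.val % 3 = r)).card = (n+3)/3 := by
  set m := (n+3)/3 with hm
  have hk : n + 3 = 3 * m := by omega
  have : ((Finset.univ : Finset (Fin m))).card = m := by simp
  rw [← this]
  refine Finset.card_bij' (fun a _ => (⟨a.val / 3, by omega⟩ : Fin m))
    (fun b _ => (⟨3 * b.val + r, by omega⟩ : Fin (n+3))) ?_ ?_ ?_ ?_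
  · intro a ha
    exact Finset.mem_univ _
  · intro b hb
    simp only [Finset.mem_filter, Finset.mem_univ, true_and]
    omega
  · intro a ha
    simp only [Finset.mem_filter, Finset.mem_univ, true_and] at ha
    apply Fin.ext
    simp only
    omega
  · intro b hb
    apply Fin.ext
    simp only
    omega

lemma card_Sres (hd : 3 ∣ (n+3)) {r : ℕ} (hr : r < 3) :
    (Sres r : Finset (Fin (n+3))).card = 2 * ((n+3)/3) := by
  have h := Finset.card_filter_add_card_filter_not
    (s := (Finset.univ : Finset (Fin (n+3)))) (p := fun i : Fin (n+3) => i.val % 3 = r)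
  rw [Finset.card_univ, Fintype.card_fin] at h
  have h2 := card_class (n := n) hd hr
  have : (Sres r : Finset (Fin (n+3))).card
      = (Finset.univ.filter (fun i : Fin (n+3) => ¬ i.val % 3 = r)).card := rfl
  rw [this]
  omega

lemma dissoc_card_le {s : Finset (Fin (n+3))} (hs : IsDissoc (cycleGraph (n+3)) s) :
    3 * s.card ≤ 2 * (n+3) := by
  have h := window_sum s
  have h2 : ∑ i : Fin (n+3), (s ∩ W i).card ≤ ∑ _i : Fin (n+3), 2 :=
    Finset.sum_le_sum (fun i _ => window_bound hs i)
  rw [Finset.sum_const, Finset.card_univ, Fintype.card_fin, smul_eq_mul] at h2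
  omega

lemma dissNum_bdd (hd : 3 ∣ (n+3)) :
    ∀ b ∈ {x | ∃ s : Finset (Fin (n+3)), ↑s ⊆ (Set.univ : Set (Fin (n+3))) ∧
      IsDissoc (cycleGraph (n+3)) s ∧ s.card = x}, b ≤ 2 * ((n+3)/3) := by
  rintro b ⟨s, -, hs, rfl⟩
  have := dissoc_card_le hs
  omega

lemma dissNumOn_univ (hd : 3 ∣ (n+3)) :
    dissNumOn (cycleGraph (n+3)) (Set.univ : Set (Fin (n+3))) = 2 * ((n+3)/3) := by
  apply le_antisymm
  · exact csSup_le ⟨0, ⟨∅, by simp, fun v hv => absurd hv (by simp), by simp⟩⟩ (dissNum_bdd hd)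
  · exact le_csSup ⟨2 * ((n+3)/3), dissNum_bdd hd⟩
      ⟨Sres 0, by simp, isDissoc_Sres hd (by norm_num), card_Sres hd (by norm_num)⟩

lemma maxdissoc_iff (hd : 3 ∣ (n+3)) {s : Finset (Fin (n+3))} :
    IsMaxDissocOn (cycleGraph (n+3)) Set.univ s ↔ ∃ r, r < 3 ∧ s = Sres r := by
  set m := (n+3)/3 with hm
  constructor
  · rintro ⟨-, hdis, hcard⟩
    rw [dissNumOn_univ hd] at hcard
    -- every window has exactly two elements of s
    have hw2 : ∀ i, (s ∩ W i).card = 2 := by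
      by_contra hnot
      push_neg at hnot
      obtain ⟨i, hi⟩ := hnot
      have hlt : ∑ i : Fin (n+3), (s ∩ W i).card < ∑ _i : Fin (n+3), 2 :=
        Finset.sum_lt_sum (fun i _ => window_bound hdis i)
          ⟨i, Finset.mem_univ i, lt_of_le_of_ne (window_bound hdis i) hi⟩
      rw [Finset.sum_const, Finset.card_univ, Fintype.card_fin, smul_eq_mul, window_sum] at hlt
      omega
    -- propagation step
    have step : ∀ i : Fin (n+3), i ∉ s → (i + 1 ∈ s ∧ i + 2 ∈ s ∧ i + 3 ∉ s) := by
      intro i hi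
      have hsub : s ∩ W i ⊆ {i + 1, i + 2} := by
        intro w hw
        obtain ⟨hws, hwW⟩ := Finset.mem_inter.1 hw
        simp only [W, Finset.mem_insert, Finset.mem_singleton] at hwW ⊢
        rcases hwW with rfl | h | h
        · exact absurd hws hi
        · exact Or.inl h
        · exact Or.inr h
      have hcard2 : ({i + 1, i + 2} : Finset (Fin (n+3))).card = 2 :=
        Finset.card_pair (add_one_ne_add_two i)
      have heq : s ∩ W i = {i + 1, i + 2} := by
        apply Finset.eq_of_subset_of_card_le hsub
        rw [hw2 i, hcard2]
      have h1 : i + 1 ∈ s := by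
        have : (i+1) ∈ s ∩ W i := by rw [heq]; simp
        exact (Finset.mem_inter.1 this).1
      have h2 : i + 2 ∈ s := by
        have : (i+2) ∈ s ∩ W i := by rw [heq]; simp
        exact (Finset.mem_inter.1 this).1
      refine ⟨h1, h2, ?_⟩
      intro h3
      have : W (i+1) ⊆ s ∩ W (i+1) := by
        intro w hw
        rw [Finset.mem_inter]
        refine ⟨?_, hw⟩
        simp only [W, Finset.mem_insert, Finset.mem_singleton] at hw
        rcases hw with rfl | rfl | rfl
        · exact h1
        · rw [show i + 1 + 1 = i + 2 by ring]; exact h2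
        · rw [show i + 1 + 2 = i + 3 by ring]; exact h3
      have hle := Finset.card_le_card this
      rw [card_W, hw2] at hle
      omega
    have step3 : ∀ i : Fin (n+3), i ∉ s → i + 3 ∉ s := fun i hi => (step i hi).2.2
    have prop : ∀ t : ℕ, ∀ i : Fin (n+3), i ∉ s → i + ((3*t : ℕ) : Fin (n+3)) ∉ s := by
      intro t
      induction t with
      | zero => intro i hi; simpa using hi
      | succ t ih =>
        intro i hi
        have : i + ((3*(t+1) : ℕ) : Fin (n+3)) = (i + ((3*t : ℕ) : Fin (n+3))) + 3 := by
          push_cast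
          ring
        rw [this]
        exact step3 _ (ih i hi)
    -- find a missing vertex
    have hk3 : n + 3 = 3 * m := by omega
    have hTcard : (sᶜ : Finset (Fin (n+3))).card = m := by
      rw [Finset.card_compl, Fintype.card_fin, hcard]; omega
    have hTpos : 0 < (sᶜ : Finset (Fin (n+3))).card := by omega
    obtain ⟨i0, hi0c⟩ := Finset.card_pos.1 hTpos
    have hi0 : i0 ∉ s := Finset.mem_compl.1 hi0c
    refine ⟨i0.val % 3, Nat.mod_lt _ (by norm_num), ?_⟩
    have hclass : ∀ j : Fin (n+3), j.val % 3 = i0.val % 3 → j ∉ s := by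
      intro j hj
      have hi0lt := i0.isLt
      have hjlt := j.isLt
      have hdvd : 3 ∣ (j.val + (n+3) - i0.val) := by omega
      set d := j.val + (n+3) - i0.val with hdd
      have hjd : j = i0 + ((d : ℕ) : Fin (n+3)) := by
        apply Fin.ext
        rw [Fin.val_add, Fin.val_natCast, Nat.add_mod_mod]
        have e2 : i0.val + d = j.val + (n+3) := by omega
        rw [e2, Nat.add_mod_right, Nat.mod_eq_of_lt j.isLt]
      rw [hjd, show d = 3 * (d/3) by omega]
      exact prop (d/3) i0 hi0
    have hCsub : (Finset.univ.filter (fun i : Fin (n+3) => i.val % 3 = i0.val % 3)) ⊆ sᶜ := by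
      intro j hjmem
      rw [Finset.mem_compl]
      exact hclass j (Finset.mem_filter.1 hjmem).2
    have hCcard := card_class (n := n) hd (Nat.mod_lt i0.val (show 0 < 3 by norm_num))
    have hCeq : (Finset.univ.filter (fun i : Fin (n+3) => i.val % 3 = i0.val % 3)) = sᶜ :=
      Finset.eq_of_subset_of_card_le hCsub (by rw [hTcard, hCcard])
    have hss : sᶜᶜ = s := compl_compl s
    rw [← hss, ← hCeq]
    ext w
    simp [Sres, Finset.mem_compl, Finset.mem_filter]
  · rintro ⟨r, hr, rfl⟩
    exact ⟨by simp, isDissoc_Sres hd hr, by rw [card_Sres hd hr, dissNumOn_univ hd]⟩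

lemma Sres_inj {r r' : ℕ} (hr : r < 3) (hr' : r' < 3)
    (h : (Sres r : Finset (Fin (n+3))) = Sres r') : r = r' := by
  by_contra hne
  have hmem : (⟨r, by omega⟩ : Fin (n+3)) ∈ (Sres r' : Finset (Fin (n+3))) := by
    rw [mem_Sres]
    simp only
    omega
  rw [← h, mem_Sres] at hmem
  simp only [Nat.mod_eq_of_lt hr] at hmem
  exact hmem rfl

lemma away_iff (hd : 3 ∣ (n+3)) (u : Fin (n+3)) (s : Finset (Fin (n+3))) :
    (IsMaxDissocOn (cycleGraph (n+3)) Set.univ s ∧ u ∉ s) ↔ s = Sres (u.val % 3) := by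
  constructor
  · rintro ⟨hmax, hu⟩
    obtain ⟨r, hr, rfl⟩ := (maxdissoc_iff hd).1 hmax
    rw [mem_Sres] at hu
    push_neg at hu
    rw [hu]
  · rintro rfl
    refine ⟨(maxdissoc_iff hd).2 ⟨u.val % 3, Nat.mod_lt _ (by norm_num), rfl⟩, ?_⟩
    rw [mem_Sres]
    simp

lemma deg1_iff (hd : 3 ∣ (n+3)) (u : Fin (n+3)) (s : Finset (Fin (n+3))) :
    (IsMaxDissocOn (cycleGraph (n+3)) Set.univ s ∧ u ∈ s ∧
        nbrCount (cycleGraph (n+3)) s u = 1) ↔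
      (s = Sres ((u.val % 3 + 1) % 3) ∨ s = Sres ((u.val % 3 + 2) % 3)) := by
  constructor
  · rintro ⟨hmax, hu, -⟩
    obtain ⟨r, hr, rfl⟩ := (maxdissoc_iff hd).1 hmax
    rw [mem_Sres] at hu
    have hulalt : u.val % 3 < 3 := Nat.mod_lt _ (by norm_num)
    have : r = (u.val % 3 + 1) % 3 ∨ r = (u.val % 3 + 2) % 3 := by omega
    rcases this with rfl | rfl
    · exact Or.inl rfl
    · exact Or.inr rfl
  · intro h
    have hm : u ∈ s ∧ ∃ r, r < 3 ∧ s = Sres r := by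
      rcases h with rfl | rfl
      · exact ⟨by rw [mem_Sres]; omega, ⟨_, by omega, rfl⟩⟩
      · exact ⟨by rw [mem_Sres]; omega, ⟨_, by omega, rfl⟩⟩
    obtain ⟨hu, r, hr, rfl⟩ := hm
    exact ⟨(maxdissoc_iff hd).2 ⟨r, hr, rfl⟩, hu, nbrCount_Sres hd hr hu⟩

lemma deg0_empty (hd : 3 ∣ (n+3)) (u : Fin (n+3)) (s : Finset (Fin (n+3))) :
    ¬ (IsMaxDissocOn (cycleGraph (n+3)) Set.univ s ∧ u ∈ s ∧
        nbrCount (cycleGraph (n+3)) s u = 0) := by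
  rintro ⟨hmax, hu, h0⟩
  obtain ⟨r, hr, rfl⟩ := (maxdissoc_iff hd).1 hmax
  rw [nbrCount_Sres hd hr hu] at h0
  exact one_ne_zero h0

theorem counts_aux (k : ℕ) (hk : 3 ≤ k) (hmod : k % 3 = 0) (u : Fin k) :
    Nat.card {s : Finset (Fin k) //
        IsMaxDissocOn (SimpleGraph.cycleGraph k) Set.univ s ∧ u ∉ s} = 1 ∧
    Nat.card {s : Finset (Fin k) //
        IsMaxDissocOn (SimpleGraph.cycleGraph k) Set.univ s ∧ u ∈ s ∧
          nbrCount (SimpleGraph.cycleGraph k) s u = 1} = 2 ∧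
    Nat.card {s : Finset (Fin k) //
        IsMaxDissocOn (SimpleGraph.cycleGraph k) Set.univ s ∧ u ∈ s ∧
          nbrCount (SimpleGraph.cycleGraph k) s u = 0} = 0 := by
  obtain ⟨n, rfl⟩ : ∃ n, k = n + 3 := ⟨k - 3, by omega⟩
  have hd : 3 ∣ (n + 3) := by omega
  refine ⟨?_, ?_, ?_⟩
  · rw [Nat.card_eq_one_iff_unique]
    constructor
    · exact ⟨fun a b => Subtype.ext (by rw [(away_iff hd u a.1).1 a.2, (away_iff hd u b.1).1 b.2])⟩
    · exact ⟨⟨Sres (u.val % 3), (away_iff hd u _).2 rfl⟩⟩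
  · have he : {s : Finset (Fin (n+3)) //
        IsMaxDissocOn (SimpleGraph.cycleGraph (n+3)) Set.univ s ∧ u ∈ s ∧
          nbrCount (SimpleGraph.cycleGraph (n+3)) s u = 1}
        ≃ ({Sres ((u.val % 3 + 1) % 3), Sres ((u.val % 3 + 2) % 3)} :
            Set (Finset (Fin (n+3)))) := by
      apply Equiv.subtypeEquivRight
      intro s
      rw [deg1_iff hd u s]
      simp [Set.mem_insert_iff]
    rw [Nat.card_congr he, Nat.card_coe_set_eq, Set.ncard_pair]
    intro h
    have := Sres_inj (n := n) (by omega) (by omega) h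
    omega
  · have : IsEmpty {s : Finset (Fin (n+3)) //
        IsMaxDissocOn (SimpleGraph.cycleGraph (n+3)) Set.univ s ∧ u ∈ s ∧
          nbrCount (SimpleGraph.cycleGraph (n+3)) s u = 0} :=
      ⟨fun x => deg0_empty hd u x.1 x.2⟩
    exact Nat.card_of_isEmpty
end

theorem cycleGraph_counts_mod3_eq_0 (k : ℕ) (hk : 3 ≤ k) (hmod : k % 3 = 0) (u : Fin k) :
    numMaxDissocAway (SimpleGraph.cycleGraph k) u = 1 ∧
    numMaxDissocDeg1 (SimpleGraph.cycleGraph k) u = 2 ∧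
    numMaxDissocDeg0 (SimpleGraph.cycleGraph k) u = 0 := by
  have h := counts_aux k hk hmod u
  exact ⟨h.1, h.2.1, h.2.2⟩
end

section
/- Let k ≥ 4 with k ≡ 1 (mod 3), and let u be a vertex of the cycle graph C_k. Then the number of maximum dissociation sets of C_k not containing u is (k+2)(k+5)/18, the number of maximum dissociation sets containing u with u of degree 1 in the induced subgraph is (k−1)(k+2)/9, and the number of maximum dissociation sets containing u with u of degree 0 in the induced subgraph is (k−1)/3. -/
open scoped Classical

variable {V : Type*}

open scoped Fin.NatCast Fin.CommRing

set_option linter.unusedSectionVars false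


section Comps

def Comps (n L : ℕ) : Type := {d : Fin n → Fin 3 // ∑ i, ((d i : ℕ) + 1) = L}

instance (n L : ℕ) : Fintype (Comps n L) := by unfold Comps; infer_instance

noncomputable def Ncomp (n L : ℕ) : ℕ := Nat.card (Comps n L)

lemma Ncomp_eq_card (n L : ℕ) : Ncomp n L = Fintype.card (Comps n L) :=
  Nat.card_eq_fintype_card

lemma Ncomp_eq_zero_of_lt {n L : ℕ} (h : 3 * n < L) : Ncomp n L = 0 := by
  rw [Ncomp_eq_card, Fintype.card_eq_zero_iff]
  constructor
  rintro ⟨d, hd⟩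
  have : ∑ i, ((d i : ℕ) + 1) ≤ ∑ _i : Fin n, 3 := by
    apply Finset.sum_le_sum
    intro i _
    have := (d i).isLt
    omega
  simp at this
  omega

/-- The equivalence splitting off the last coordinate. -/
noncomputable def compsSplit (n L : ℕ) (hL : 3 ≤ L) :
    Comps (n + 1) L ≃ Σ c : Fin 3, Comps n (L - ((c : ℕ) + 1)) := by
  unfold Comps
  refine Equiv.trans (Equiv.subtypeEquiv (Fin.insertNthEquiv (fun _ => Fin 3) (Fin.last n)).symm ?_)
    (Equiv.trans (Equiv.subtypeProdEquivSigmaSubtype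
      (fun (c : Fin 3) (g : Fin n → Fin 3) => ((c:ℕ)+1) + ∑ i, ((g i : ℕ) + 1) = L)) ?_)
  · intro d
    rw [Fin.sum_univ_succAbove (fun i => ((d i : ℕ) + 1)) (Fin.last n)]
    simp [Fin.init]
  · refine Equiv.sigmaCongrRight (fun c => Equiv.subtypeEquivRight ?_)
    intro g
    have : (c : ℕ) + 1 ≤ L := by have := c.isLt; omega
    omega

lemma Ncomp_succ (n L : ℕ) (hL : 3 ≤ L) :
    Ncomp (n+1) L = Ncomp n (L - 1) + Ncomp n (L - 2) + Ncomp n (L - 3) := by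
  have h := Nat.card_congr (compsSplit n L hL)
  rw [show Nat.card (Comps (n+1) L) = Ncomp (n+1) L from rfl] at h
  rw [h, Nat.card_eq_fintype_card, Fintype.card_sigma, Fin.sum_univ_three]
  norm_num [Ncomp_eq_card]

lemma Ncomp_self (n : ℕ) : Ncomp n (3 * n) = 1 := by
  induction n with
  | zero =>
    rw [Ncomp_eq_card]
    rw [Fintype.card_eq_one_iff]
    refine ⟨⟨fun i => i.elim0, by simp⟩, ?_⟩
    rintro ⟨d, hd⟩
    apply Subtype.ext
    funext i
    exact i.elim0
  | succ n ih =>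
    rw [show 3 * (n+1) = 3*n + 3 by ring, Ncomp_succ n _ (by omega)]
    have h1 : Ncomp n (3*n+3-1) = 0 := Ncomp_eq_zero_of_lt (by omega)
    have h2 : Ncomp n (3*n+3-2) = 0 := Ncomp_eq_zero_of_lt (by omega)
    have h3 : 3*n+3-3 = 3*n := by omega
    rw [h1, h2, h3, ih]

lemma Ncomp_one_two : Ncomp 1 2 = 1 := by
  rw [Ncomp_eq_card]; decide

lemma Ncomp_one_one : Ncomp 1 1 = 1 := by
  rw [Ncomp_eq_card]; decide

lemma Ncomp_sub_one (n : ℕ) : Ncomp (n+1) (3*n+2) = n + 1 := by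
  induction n with
  | zero => simpa using Ncomp_one_two
  | succ n ih =>
    rw [show 3*(n+1)+2 = (3*n+5) by ring, Ncomp_succ _ _ (by omega)]
    have h1 : Ncomp (n+1) (3*n+5-1) = 0 := Ncomp_eq_zero_of_lt (by omega)
    have h2 : 3*n+5-2 = 3*(n+1) := by omega
    have h3 : 3*n+5-3 = 3*n+2 := by omega
    rw [h1, h2, h3, Ncomp_self, ih]
    omega

lemma Ncomp_sub_two (n : ℕ) : 2 * Ncomp (n+1) (3*n+1) = (n+1) * (n+2) := by
  induction n with
  | zero => simpa using Ncomp_one_one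
  | succ n ih =>
    rw [show 3*(n+1)+1 = (3*n+4) by ring, Ncomp_succ _ _ (by omega)]
    have h1 : 3*n+4-1 = 3*(n+1) := by omega
    have h2 : 3*n+4-2 = 3*n+2 := by omega
    have h3 : 3*n+4-3 = 3*n+1 := by omega
    rw [h1, h2, h3, Ncomp_self, Ncomp_sub_one]
    nlinarith [ih]

end Comps



def compsLast (n L : ℕ) (c : Fin 3) (hL : (c : ℕ) + 1 ≤ L) :
    {d : Comps (n+1) L // d.1 (Fin.last n) = c} ≃ Comps n (L - ((c:ℕ)+1)) where
  toFun d := ⟨Fin.init d.1.1, by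
    have hs := d.1.2
    rw [Fin.sum_univ_castSucc] at hs
    have hc : d.1.1 (Fin.last n) = c := d.2
    rw [hc] at hs
    simp only [Fin.init]
    omega⟩
  invFun g := ⟨⟨Fin.snoc g.1 c, by
    rw [Fin.sum_univ_castSucc]
    simp only [Fin.snoc_last, Fin.snoc_castSucc]
    rw [g.2]
    omega⟩, by simp⟩
  left_inv d := by
    apply Subtype.ext; apply Subtype.ext
    have hc : d.1.1 (Fin.last n) = c := d.2
    simp [← hc, Fin.snoc_init_self]
  right_inv g := by
    apply Subtype.ext
    simp [Fin.init_snoc]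

section CycleBasics

variable {k : ℕ} [NeZero k]

lemma fin_val_one (hk : 2 ≤ k) : ((1 : Fin k) : ℕ) = 1 := by
  rw [Fin.val_one']
  exact Nat.mod_eq_of_lt (by omega)

lemma cyc_adj (hk : 2 ≤ k) (u v : Fin k) :
    (SimpleGraph.cycleGraph k).Adj u v ↔ v = u - 1 ∨ v = u + 1 := by
  rw [SimpleGraph.cycleGraph_adj']
  have e1 : ((u - v : Fin k) : ℕ) = 1 ↔ u - v = 1 := by
    rw [Fin.ext_iff, fin_val_one hk]
  have e2 : ((v - u : Fin k) : ℕ) = 1 ↔ v - u = 1 := by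
    rw [Fin.ext_iff, fin_val_one hk]
  rw [e1, e2]
  constructor
  · rintro (h | h)
    · left; rw [← h]; ring
    · right; rw [← h]; ring
  · rintro (h | h)
    · left; rw [h]; ring
    · right; rw [h]; ring

lemma two_ne (hk : 4 ≤ k) (u : Fin k) : u - 1 ≠ u + 1 := by
  intro h
  have h2 : ((2 : ℕ) : Fin k) = 0 := by
    have h3 : (u + 1) - (u - 1) = ((2 : ℕ) : Fin k) := by push_cast; ring
    rw [← h3, ← h]; ring
  have h4 := congrArg Fin.val h2
  rw [Fin.val_natCast, Fin.val_zero, Nat.mod_eq_of_lt (by omega)] at h4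
  omega

lemma nbrCount_cyc (hk : 4 ≤ k) (s : Finset (Fin k)) (u : Fin k) :
    nbrCount (SimpleGraph.cycleGraph k) s u =
      (if u - 1 ∈ s then 1 else 0) + (if u + 1 ∈ s then 1 else 0) := by
  have hne := two_ne hk u
  have hset : {w ∈ (s : Set (Fin k)) | (SimpleGraph.cycleGraph k).Adj u w} =
      ↑(s.filter (fun w => w = u - 1 ∨ w = u + 1)) := by
    ext w
    simp only [Set.mem_setOf_eq, Finset.coe_filter, cyc_adj (by omega : 2 ≤ k) u w, Finset.mem_coe]
  rw [nbrCount, hset, Set.ncard_coe_finset]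
  rw [Finset.filter_or, Finset.filter_eq', Finset.filter_eq']
  by_cases h1 : u - 1 ∈ s <;> by_cases h2 : u + 1 ∈ s <;>
    simp [h1, h2, Finset.card_insert_of_notMem, hne, hne.symm, Finset.union_comm]
end CycleBasics


section Phi
variable {m : ℕ}

def gfun (m : ℕ) (d : Fin (m+1) → Fin 3) (l : ℕ) : ℕ :=
  if h : l < m+1 then ((d ⟨l, h⟩ : ℕ) + 1) else 1

def Pfun (m : ℕ) (d : Fin (m+1) → Fin 3) (t : ℕ) : ℕ :=
  ∑ l ∈ Finset.range t, gfun m d l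

lemma gfun_pos (d : Fin (m+1) → Fin 3) (l : ℕ) : 1 ≤ gfun m d l := by
  unfold gfun; split <;> omega

lemma gfun_le (d : Fin (m+1) → Fin 3) (l : ℕ) : gfun m d l ≤ 3 := by
  unfold gfun; split
  · next h => have := (d ⟨l, h⟩).isLt; omega
  · omega

lemma Pfun_succ (d : Fin (m+1) → Fin 3) (t : ℕ) :
    Pfun m d (t+1) = Pfun m d t + gfun m d t := Finset.sum_range_succ _ _

lemma Pfun_strictMono (d : Fin (m+1) → Fin 3) : StrictMono (Pfun m d) := by
  apply strictMono_nat_of_lt_succ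
  intro t
  rw [Pfun_succ]
  have := gfun_pos d t
  omega

lemma Pfun_zero (d : Fin (m+1) → Fin 3) : Pfun m d 0 = 0 := rfl

lemma Pfun_top (d : Fin (m+1) → Fin 3) {k : ℕ} (hd : ∑ i, ((d i : ℕ) + 1) = k) :
    Pfun m d (m+1) = k := by
  rw [← hd, Pfun]
  rw [← Fin.sum_univ_eq_sum_range (fun l => gfun m d l) (m+1)]
  apply Finset.sum_congr rfl
  intro i _
  simp [gfun, i.isLt]

lemma Pfun_lt (d : Fin (m+1) → Fin 3) {k : ℕ} (hd : ∑ i, ((d i : ℕ) + 1) = k)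
    (i : Fin (m+1)) : Pfun m d i.1 < k := by
  rw [← Pfun_top d hd]
  exact Pfun_strictMono d i.isLt

lemma Pfun_le_last (d : Fin (m+1) → Fin 3) (i : Fin (m+1)) :
    Pfun m d i.1 ≤ Pfun m d m := (Pfun_strictMono d).monotone (by omega)

lemma Pfun_last (d : Fin (m+1) → Fin 3) {k : ℕ} (hd : ∑ i, ((d i : ℕ) + 1) = k) :
    Pfun m d m + ((d (Fin.last m) : ℕ) + 1) = k := by
  have := Pfun_top d hd
  rw [Pfun_succ] at this
  rw [← this]
  congr 1
  simp [gfun]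
  rfl

variable {k : ℕ} [NeZero k]

def Tset (m : ℕ) (a : Fin k) (d : Fin (m+1) → Fin 3) : Finset (Fin k) :=
  Finset.image (fun i : Fin (m+1) => a + ((Pfun m d i.1 : ℕ) : Fin k)) Finset.univ

lemma mem_Tset_iff {a : Fin k} {d : Fin (m+1) → Fin 3} (hd : ∑ i, ((d i : ℕ) + 1) = k)
    (x : ℕ) (hx : x < k) :
    a + (x : Fin k) ∈ Tset m a d ↔ ∃ i : Fin (m+1), Pfun m d i.1 = x := by
  constructor
  · intro h
    rw [Tset, Finset.mem_image] at h
    obtain ⟨i, -, hi⟩ := h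
    refine ⟨i, ?_⟩
    have := add_left_cancel hi
    have hv := congrArg Fin.val this
    rwa [Fin.val_cast_of_lt (Pfun_lt d hd i), Fin.val_cast_of_lt hx] at hv
  · rintro ⟨i, hi⟩
    rw [Tset, Finset.mem_image]
    exact ⟨i, Finset.mem_univ i, by rw [hi]⟩

lemma card_Tset {a : Fin k} {d : Fin (m+1) → Fin 3} (hd : ∑ i, ((d i : ℕ) + 1) = k) :
    (Tset m a d).card = m + 1 := by
  rw [Tset, Finset.card_image_of_injective _ ?_, Finset.card_univ, Fintype.card_fin]
  intro i j hij
  have := add_left_cancel hij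
  have hv := congrArg Fin.val this
  rw [Fin.val_cast_of_lt (Pfun_lt d hd i), Fin.val_cast_of_lt (Pfun_lt d hd j)] at hv
  have := (Pfun_strictMono d).injective hv
  exact Fin.ext this

lemma a_mem_Tset (a : Fin k) (d : Fin (m+1) → Fin 3) : a ∈ Tset m a d := by
  rw [Tset, Finset.mem_image]
  exact ⟨0, Finset.mem_univ _, by simp [Pfun_zero]⟩

lemma windows_Tset {a : Fin k} {d : Fin (m+1) → Fin 3} (hd : ∑ i, ((d i : ℕ) + 1) = k)
    (j : Fin k) : j ∈ Tset m a d ∨ j + 1 ∈ Tset m a d ∨ j + 2 ∈ Tset m a d := by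
  set r : ℕ := ((j - a : Fin k) : ℕ) with hr
  have hrk : r < k := (j - a).isLt
  have hj : j = a + (r : Fin k) := by
    rw [hr, Fin.cast_val_eq_self]
    ring
  have hj1 : j + 1 = a + ((r + 1 : ℕ) : Fin k) := by
    rw [hj]; push_cast; ring
  have hj2 : j + 2 = a + ((r + 2 : ℕ) : Fin k) := by
    rw [hj]; push_cast; ring
  -- largest t with P t ≤ r
  set i0 := Nat.findGreatest (fun t => Pfun m d t ≤ r) (m+1) with hi0
  have h0 : Pfun m d i0 ≤ r :=
    Nat.findGreatest_spec (P := fun t => Pfun m d t ≤ r) (Nat.zero_le _)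
      (by show Pfun m d 0 ≤ r; rw [Pfun_zero]; exact Nat.zero_le _)
  have hi0le : i0 ≤ m := by
    by_contra hcon
    have : i0 ≤ m + 1 := Nat.findGreatest_le _
    have : i0 = m + 1 := by omega
    rw [this, Pfun_top d hd] at h0
    omega
  have hgt : r < Pfun m d (i0 + 1) := by
    by_contra hcon
    push_neg at hcon
    exact Nat.findGreatest_is_greatest (P := fun t => Pfun m d t ≤ r) (n := m+1) (by omega) (by omega) hcon
  have hle3 : Pfun m d (i0 + 1) ≤ Pfun m d i0 + 3 := by
    rw [Pfun_succ]
    have := gfun_le d i0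
    omega
  rcases eq_or_lt_of_le h0 with heq | hlt
  · left
    rw [hj]
    exact (mem_Tset_iff hd r hrk).2 ⟨⟨i0, by omega⟩, heq⟩
  · -- P i0 < r, so P (i0+1) ∈ {r+1, r+2}
    have hcases : Pfun m d (i0+1) = r + 1 ∨ Pfun m d (i0+1) = r + 2 := by omega
    by_cases hm1 : i0 + 1 = m + 1
    · -- P (i0+1) = k
      rw [hm1, Pfun_top d hd] at hcases
      rcases hcases with h | h
      · right; left
        have hz : ((r + 1 : ℕ) : Fin k) = 0 := by rw [← h]; simp
        rw [hj1, hz]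
        simpa using a_mem_Tset a d
      · right; right
        have hz : ((r + 2 : ℕ) : Fin k) = 0 := by rw [← h]; simp
        rw [hj2, hz]
        simpa using a_mem_Tset a d
    · have hlt' : i0 + 1 < m + 1 := by omega
      rcases hcases with h | h
      · right; left
        rw [hj1]
        exact (mem_Tset_iff hd (r+1) (by
          have := Pfun_lt d hd ⟨i0+1, hlt'⟩; simpa [h] using this)).2 ⟨⟨i0+1, hlt'⟩, h⟩
      · right; right
        rw [hj2]
        exact (mem_Tset_iff hd (r+2) (by
          have := Pfun_lt d hd ⟨i0+1, hlt'⟩; simpa [h] using this)).2 ⟨⟨i0+1, hlt'⟩, h⟩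
end Phi

section Last
variable {m k : ℕ} [NeZero k] {a : Fin k} {d : Fin (m+1) → Fin 3}

lemma sub_cast (a : Fin k) (j : ℕ) (hj : j ≤ k) :
    a - ((j : ℕ) : Fin k) = a + ((k - j : ℕ) : Fin k) := by
  have h : ((k - j : ℕ) : Fin k) = ((k : ℕ) : Fin k) - ((j : ℕ) : Fin k) :=
    Nat.cast_sub hj
  rw [h, Fin.natCast_self]
  ring

lemma mem_sub_iff (hd : ∑ i, ((d i : ℕ) + 1) = k) {j : ℕ} (h1 : 1 ≤ j) (h3 : j ≤ k) :
    a - ((j : ℕ) : Fin k) ∈ Tset m a d ↔ ∃ i : Fin (m+1), Pfun m d i.1 = k - j := by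
  rw [sub_cast a j h3]
  exact mem_Tset_iff hd (k - j) (by omega)

lemma exists_P_last (hd : ∑ i, ((d i : ℕ) + 1) = k) :
    ∃ i : Fin (m+1), Pfun m d i.1 = k - ((d (Fin.last m) : ℕ) + 1) := by
  refine ⟨Fin.last m, ?_⟩
  have := Pfun_last d hd
  rw [Fin.val_last]
  omega

lemma P_le_max (hd : ∑ i, ((d i : ℕ) + 1) = k) (i : Fin (m+1)) :
    Pfun m d i.1 ≤ k - ((d (Fin.last m) : ℕ) + 1) := by
  have h1 := Pfun_le_last d i
  have h2 := Pfun_last d hd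
  omega

lemma lastPart₀ (hk4 : 4 ≤ k) (hd : ∑ i, ((d i : ℕ) + 1) = k) :
    a - 1 ∈ Tset m a d ↔ (d (Fin.last m) : ℕ) = 0 := by
  have h1 : (1 : Fin k) = ((1 : ℕ) : Fin k) := by norm_num
  rw [h1, mem_sub_iff hd (by omega) (by omega)]
  have hP := Pfun_last d hd
  have hdl := (d (Fin.last m)).isLt
  constructor
  · rintro ⟨i, hi⟩
    have := P_le_max hd i
    omega
  · intro h
    refine ⟨Fin.last m, ?_⟩
    rw [Fin.val_last]
    omega

lemma lastPart₁ (hk4 : 4 ≤ k) (hd : ∑ i, ((d i : ℕ) + 1) = k) :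
    (a - 1 ∉ Tset m a d ∧ a - 2 ∈ Tset m a d) ↔ (d (Fin.last m) : ℕ) = 1 := by
  have h2 : (2 : Fin k) = ((2 : ℕ) : Fin k) := by norm_num
  rw [lastPart₀ hk4 hd, h2, mem_sub_iff hd (by omega) (by omega)]
  have hP := Pfun_last d hd
  have hdl := (d (Fin.last m)).isLt
  constructor
  · rintro ⟨h0, i, hi⟩
    have := P_le_max hd i
    omega
  · intro h
    constructor
    · omega
    · refine ⟨Fin.last m, ?_⟩
      rw [Fin.val_last]
      omega

lemma lastPart₂ (hk4 : 4 ≤ k) (hd : ∑ i, ((d i : ℕ) + 1) = k) :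
    (a - 1 ∉ Tset m a d ∧ a - 2 ∉ Tset m a d) ↔ (d (Fin.last m) : ℕ) = 2 := by
  have h2 : (2 : Fin k) = ((2 : ℕ) : Fin k) := by norm_num
  rw [lastPart₀ hk4 hd, h2, mem_sub_iff hd (by omega) (by omega)]
  have hP := Pfun_last d hd
  have hdl := (d (Fin.last m)).isLt
  constructor
  · rintro ⟨h0, h1⟩
    by_contra hcon
    have hd1 : (d (Fin.last m) : ℕ) = 1 := by omega
    exact h1 ⟨Fin.last m, by rw [Fin.val_last]; omega⟩
  · intro h
    refine ⟨by omega, ?_⟩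
    rintro ⟨i, hi⟩
    have := P_le_max hd i
    omega

lemma lastPart₂_mem (hk4 : 4 ≤ k) (hd : ∑ i, ((d i : ℕ) + 1) = k)
    (h : (d (Fin.last m) : ℕ) = 2) : a - 3 ∈ Tset m a d := by
  have h3 : (3 : Fin k) = ((3 : ℕ) : Fin k) := by norm_num
  rw [h3, mem_sub_iff hd (by omega) (by omega)]
  have hP := Pfun_last d hd
  exact ⟨Fin.last m, by rw [Fin.val_last]; omega⟩

lemma Tset_inj (hd : ∑ i, ((d i : ℕ) + 1) = k) {d' : Fin (m+1) → Fin 3}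
    (hd' : ∑ i, ((d' i : ℕ) + 1) = k) (h : Tset m a d = Tset m a d') : d = d' := by
  have key : ∀ t : ℕ, t ≤ m + 1 → Pfun m d t = Pfun m d' t := by
    intro t
    induction t with
    | zero => intro _; rw [Pfun_zero, Pfun_zero]
    | succ t ih =>
      intro ht
      rcases Nat.lt_or_ge (t+1) (m+1) with hlt | hge
      · have ih' := ih (by omega)
        -- ∃ j, P' j = P (t+1)
        have hmem : a + ((Pfun m d (t+1) : ℕ) : Fin k) ∈ Tset m a d' := by
          rw [← h]
          exact (mem_Tset_iff hd _ (Pfun_lt d hd ⟨t+1, hlt⟩)).2 ⟨⟨t+1, hlt⟩, rfl⟩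
        obtain ⟨jj, hjj⟩ := (mem_Tset_iff hd' _ (Pfun_lt d hd ⟨t+1, hlt⟩)).1 hmem
        simp only [Fin.val_mk] at hjj
        have hmem' : a + ((Pfun m d' (t+1) : ℕ) : Fin k) ∈ Tset m a d := by
          rw [h]
          exact (mem_Tset_iff hd' _ (Pfun_lt d' hd' ⟨t+1, hlt⟩)).2 ⟨⟨t+1, hlt⟩, rfl⟩
        obtain ⟨jj', hjj'⟩ := (mem_Tset_iff hd _ (Pfun_lt d' hd' ⟨t+1, hlt⟩)).1 hmem'
        simp only [Fin.val_mk] at hjj'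
        -- P (t+1) ≥ P' (t+1)
        have hge1 : Pfun m d (t+1) ≥ Pfun m d' (t+1) := by
          rcases Nat.lt_or_ge (jj : ℕ) (t+1) with hj | hj
          · exfalso
            have : Pfun m d' jj.1 ≤ Pfun m d' t := (Pfun_strictMono d').monotone (by omega)
            have hPt : Pfun m d t < Pfun m d (t+1) := Pfun_strictMono d (by omega)
            omega
          · have : Pfun m d' (t+1) ≤ Pfun m d' jj.1 := (Pfun_strictMono d').monotone hj
            omega
        have hge2 : Pfun m d' (t+1) ≥ Pfun m d (t+1) := by
          rcases Nat.lt_or_ge (jj' : ℕ) (t+1) with hj | hj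
          · exfalso
            have : Pfun m d jj'.1 ≤ Pfun m d t := (Pfun_strictMono d).monotone (by omega)
            have hPt : Pfun m d' t < Pfun m d' (t+1) := Pfun_strictMono d' (by omega)
            omega
          · have : Pfun m d (t+1) ≤ Pfun m d jj'.1 := (Pfun_strictMono d).monotone hj
            omega
        omega
      · have ht1 : t + 1 = m + 1 := by omega
        rw [ht1, Pfun_top d hd, Pfun_top d' hd']
  funext i
  have h1 := key i.1 (by omega)
  have h2 := key (i.1 + 1) (by omega)
  rw [Pfun_succ, Pfun_succ] at h2
  have hg : gfun m d i.1 = gfun m d' i.1 := by omega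
  unfold gfun at hg
  rw [dif_pos i.isLt, dif_pos i.isLt] at hg
  apply Fin.ext
  simpa using hg

end Last

section Surj
variable {m k : ℕ} [NeZero k] {a : Fin k}

lemma Pfun_top' (d : Fin (m+1) → Fin 3) : Pfun m d (m+1) = ∑ i, ((d i : ℕ) + 1) := by
  rw [Pfun, ← Fin.sum_univ_eq_sum_range (fun l => gfun m d l) (m+1)]
  apply Finset.sum_congr rfl
  intro i _
  simp [gfun, i.isLt]

lemma Tset_surj (hk4 : 4 ≤ k) (hkm : k = 3*m+1) {s : Finset (Fin k)}
    (hdis : ∀ j : Fin k, ¬(j ∈ s ∧ j + 1 ∈ s ∧ j + 2 ∈ s))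
    (hcard : s.card = 2*m) (ha : a ∉ s) :
    ∃ d : Fin (m+1) → Fin 3, (∑ i, ((d i : ℕ) + 1) = k) ∧ Tset m a d = sᶜ := by
  set T : Finset (Fin k) := sᶜ with hT
  have haT : a ∈ T := Finset.mem_compl.2 ha
  have hTcard : T.card = m + 1 := by
    rw [hT, Finset.card_compl, hcard]
    simp only [Fintype.card_fin]
    omega
  have hsubinj : Function.Injective (fun x : Fin k => x - a) := fun x y h => by
    have : x - a = y - a := h
    have := congrArg (· + a) this
    simpa using this
  set B : Finset (Fin k) := T.image (fun x => x - a) with hB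
  have hBcard : B.card = m + 1 := by
    rw [hB, Finset.card_image_of_injective _ hsubinj, hTcard]
  set f := B.orderEmbOfFin hBcard with hf
  have hfmem : ∀ i, f i ∈ B := fun i => Finset.orderEmbOfFin_mem B hBcard i
  have hmemf : ∀ x ∈ B, ∃ i, f i = x := by
    intro x hx
    have : x ∈ Set.range f := by
      rw [Finset.range_orderEmbOfFin]
      exact hx
    exact this
  have hBmemT : ∀ x ∈ B, a + x ∈ T := by
    intro x hx
    rw [hB, Finset.mem_image] at hx
    obtain ⟨y, hy, rfl⟩ := hx
    simpa using hy
  have h0B : (0 : Fin k) ∈ B := by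
    rw [hB, Finset.mem_image]
    exact ⟨a, haT, by simp⟩
  have hf0 : f 0 = 0 := by
    obtain ⟨i, hi⟩ := hmemf 0 h0B
    have h1 : f 0 ≤ f i := f.monotone (Fin.zero_le i)
    rw [hi] at h1
    exact le_antisymm h1 (Fin.zero_le _)
  -- numeric version
  set fval : ℕ → ℕ := fun t => if h : t < m+1 then ((f ⟨t, h⟩ : Fin k) : ℕ) else k with hfval
  have hfval_lt : ∀ t, fval t ≤ k := by
    intro t
    simp only [hfval]
    split
    · exact le_of_lt (Fin.is_lt _)
    · exact le_refl k
  have hfval0 : fval 0 = 0 := by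
    rw [hfval]
    simp only [dif_pos (by omega : 0 < m+1)]
    rw [show (⟨0, by omega⟩ : Fin (m+1)) = 0 from rfl, hf0]
    rfl
  have hfval_mono : ∀ t, t ≤ m → fval t < fval (t+1) := by
    intro t ht
    rw [hfval]
    rcases Nat.lt_or_ge (t+1) (m+1) with h1 | h1
    · simp only [dif_pos (by omega : t < m+1), dif_pos h1]
      have : (⟨t, by omega⟩ : Fin (m+1)) < ⟨t+1, h1⟩ := by
        rw [Fin.mk_lt_mk]; omega
      exact f.strictMono this
    · simp only [dif_pos (by omega : t < m+1), dif_neg (by omega : ¬ (t+1 < m+1))]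
      exact Fin.is_lt _
  -- gap bound
  have hgap : ∀ t, t ≤ m → fval (t+1) ≤ fval t + 3 := by
    intro t ht
    by_contra hcon
    push_neg at hcon
    set x : ℕ := fval t with hx
    have hxval : x = ((f ⟨t, by omega⟩ : Fin k) : ℕ) := by
      rw [hx, hfval]
      simp only [dif_pos (by omega : t < m+1)]
    have hnotT : ∀ e : ℕ, 1 ≤ e → e ≤ 3 → a + ((x + e : ℕ) : Fin k) ∉ T := by
      intro e he1 he3 hmem
      have hxek : x + e < k := by
        have := hfval_lt (t+1)
        omega
      have hxeB : ((x + e : ℕ) : Fin k) ∈ B := by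
        rw [hB, Finset.mem_image]
        exact ⟨a + ((x + e : ℕ) : Fin k), hmem, by ring⟩
      obtain ⟨i, hi⟩ := hmemf _ hxeB
      have hival : ((f i : Fin k) : ℕ) = x + e := by
        rw [hi, Fin.val_cast_of_lt hxek]
      rcases Nat.lt_or_ge (t : ℕ) i.1 with hcase | hcase
      · -- t < i.1 so t+1 ≤ i.1 ≤ m, fval (t+1) ≤ f i
        have htm : t + 1 < m + 1 := by
          have := i.isLt
          omega
        have h1 : (⟨t+1, htm⟩ : Fin (m+1)) ≤ i := by
          rw [Fin.mk_le_mk]; omega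
        have h2 : fval (t+1) ≤ ((f i : Fin k) : ℕ) := by
          rw [hfval]
          simp only [dif_pos htm]
          exact f.monotone h1
        omega
      · have h1 : i ≤ (⟨t, by omega⟩ : Fin (m+1)) := by
          rw [Fin.le_def]
          exact hcase
        have h2 : ((f i : Fin k) : ℕ) ≤ x := by
          rw [hxval]
          exact f.monotone h1
        omega
    have hmem1 : a + ((x + 1 : ℕ) : Fin k) ∈ s := by
      have := hnotT 1 (by omega) (by omega)
      rw [hT, Finset.mem_compl, not_not] at this
      exact this
    have hmem2 : a + ((x + 2 : ℕ) : Fin k) ∈ s := by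
      have := hnotT 2 (by omega) (by omega)
      rw [hT, Finset.mem_compl, not_not] at this
      exact this
    have hmem3 : a + ((x + 3 : ℕ) : Fin k) ∈ s := by
      have := hnotT 3 (by omega) (by omega)
      rw [hT, Finset.mem_compl, not_not] at this
      exact this
    refine hdis (a + ((x + 1 : ℕ) : Fin k)) ⟨hmem1, ?_, ?_⟩
    · have : a + ((x + 1 : ℕ) : Fin k) + 1 = a + ((x + 2 : ℕ) : Fin k) := by
        push_cast; ring
      rw [this]; exact hmem2
    · have : a + ((x + 1 : ℕ) : Fin k) + 2 = a + ((x + 3 : ℕ) : Fin k) := by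
        push_cast; ring
      rw [this]; exact hmem3
  have hfvaltop : fval (m+1) = k := by
    rw [hfval]; simp
  -- define d
  set d : Fin (m+1) → Fin 3 := fun i =>
    ⟨fval (i.1+1) - fval i.1 - 1, by
      have h1 := hfval_mono i.1 (by omega)
      have h2 := hgap i.1 (by omega)
      omega⟩ with hd
  have hPf : ∀ t, t ≤ m+1 → Pfun m d t = fval t := by
    intro t
    induction t with
    | zero => intro _; rw [Pfun_zero, hfval0]
    | succ t ih =>
      intro ht
      have ih' := ih (by omega)
      rw [Pfun_succ, ih']
      have hgt : gfun m d t = fval (t+1) - fval t := by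
        unfold gfun
        rw [dif_pos (by omega : t < m+1)]
        rw [hd]
        simp only []
        have h1 := hfval_mono t (by omega)
        omega
      rw [hgt]
      have h1 := hfval_mono t (by omega)
      omega
  have hsum : ∑ i, ((d i : ℕ) + 1) = k := by
    rw [← Pfun_top' d, hPf (m+1) (le_refl _), hfvaltop]
  refine ⟨d, hsum, ?_⟩
  have hsub : Tset m a d ⊆ T := by
    intro x hx
    rw [Tset, Finset.mem_image] at hx
    obtain ⟨i, -, rfl⟩ := hx
    have hPi : Pfun m d i.1 = ((f i : Fin k) : ℕ) := by
      rw [hPf i.1 (by omega), hfval]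
      simp only [dif_pos i.isLt]
    rw [hPi, Fin.cast_val_eq_self]
    exact hBmemT _ (hfmem i)
  have := Finset.eq_of_subset_of_card_le hsub (by
    rw [hTcard, card_Tset hsum])
  exact this
end Surj


section Main
variable {m k : ℕ} [NeZero k]

lemma dissoc_iff_windows (hk4 : 4 ≤ k) (s : Finset (Fin k)) :
    IsDissoc (SimpleGraph.cycleGraph k) s ↔
      ∀ j : Fin k, ¬(j ∈ s ∧ j + 1 ∈ s ∧ j + 2 ∈ s) := by
  constructor
  · rintro hd j ⟨h0, h1, h2⟩
    have hh := hd (j+1) h1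
    rw [nbrCount_cyc hk4] at hh
    have e0 : j + 1 - 1 = j := by ring
    have e2 : j + 1 + 1 = j + 2 := by ring
    rw [e0, e2, if_pos h0, if_pos h2] at hh
    omega
  · intro hw v hv
    rw [nbrCount_cyc hk4]
    by_cases hb1 : v - 1 ∈ s
    · by_cases hb2 : v + 1 ∈ s
      · exfalso
        refine hw (v - 1) ⟨hb1, ?_, ?_⟩
        · rw [show v - 1 + 1 = v by ring]; exact hv
        · rw [show v - 1 + 2 = v + 1 by ring]; exact hb2
      · simp [hb1, hb2]
    · rw [if_neg hb1]
      split <;> omega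

lemma card_le_of_dissoc (hk4 : 4 ≤ k) {s : Finset (Fin k)}
    (hd : IsDissoc (SimpleGraph.cycleGraph k) s) : 3 * s.card ≤ 2 * k := by
  rw [dissoc_iff_windows hk4] at hd
  have hW : ∀ j : Fin k,
      ((if j ∈ s then 1 else 0) + (if j+1 ∈ s then 1 else 0)
        + (if j+2 ∈ s then 1 else 0) : ℕ) ≤ 2 := by
    intro j
    have hj := hd j
    by_cases h0 : j ∈ s <;> by_cases h1 : (j+1) ∈ s <;> by_cases h2 : (j+2) ∈ s <;>
      simp only [h0, h1, h2, if_true, if_false, eq_self_iff_true, not_true, not_false_iff] <;>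
      first
        | omega
        | exact absurd ⟨h0, h1, h2⟩ hj
  have h1 : ∑ j : Fin k, (if j ∈ s then (1:ℕ) else 0) = s.card := by
    simp [Finset.sum_ite_mem]
  have h2 : ∑ j : Fin k, (if j + 1 ∈ s then (1:ℕ) else 0) = s.card := by
    rw [← h1]
    exact Fintype.sum_equiv (Equiv.addRight (1 : Fin k)) _ _ (fun j => by simp; congr)
  have h3 : ∑ j : Fin k, (if j + 2 ∈ s then (1:ℕ) else 0) = s.card := by
    rw [← h1]
    exact Fintype.sum_equiv (Equiv.addRight (2 : Fin k)) _ _ (fun j => by simp; congr)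
  have hsum : ∑ j : Fin k, ((if j ∈ s then 1 else 0) + (if j+1 ∈ s then 1 else 0)
      + (if j+2 ∈ s then 1 else 0) : ℕ) ≤ 2 * k := by
    calc ∑ j : Fin k, ((if j ∈ s then 1 else 0) + (if j+1 ∈ s then 1 else 0)
          + (if j+2 ∈ s then 1 else 0) : ℕ)
        ≤ ∑ _j : Fin k, (2:ℕ) := Finset.sum_le_sum (fun j _ => hW j)
      _ = 2 * k := by simp [Finset.card_univ, mul_comm]
  rw [Finset.sum_add_distrib, Finset.sum_add_distrib, h1, h2, h3] at hsum
  omega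

lemma compl_Tset_dissoc (hk4 : 4 ≤ k) {a : Fin k} {d : Fin (m+1) → Fin 3}
    (hd : ∑ i, ((d i : ℕ) + 1) = k) :
    IsDissoc (SimpleGraph.cycleGraph k) (Tset m a d)ᶜ := by
  rw [dissoc_iff_windows hk4]
  rintro j ⟨h0, h1, h2⟩
  rcases windows_Tset hd j with h | h | h
  · exact (Finset.mem_compl.1 h0) h
  · exact (Finset.mem_compl.1 h1) h
  · exact (Finset.mem_compl.1 h2) h

lemma compl_Tset_card (hkm : k = 3*m+1) {a : Fin k} {d : Fin (m+1) → Fin 3}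
    (hd : ∑ i, ((d i : ℕ) + 1) = k) :
    ((Tset m a d)ᶜ : Finset (Fin k)).card = 2 * m := by
  rw [Finset.card_compl, card_Tset hd]
  simp only [Fintype.card_fin]
  omega

def dzero (m : ℕ) : Fin (m+1) → Fin 3 := fun i => if i = Fin.last m then 0 else 2

lemma dzero_sum (hkm : k = 3*m+1) : ∑ i, ((dzero m i : ℕ) + 1) = k := by
  rw [Fin.sum_univ_castSucc]
  have hlast : ((dzero m (Fin.last m) : ℕ) + 1) = 1 := by simp [dzero]
  have hcs : ∀ i : Fin m, ((dzero m i.castSucc : ℕ) + 1) = 3 := by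
    intro i
    have : i.castSucc ≠ Fin.last m := (Fin.castSucc_lt_last i).ne
    simp [dzero, this]
  rw [Finset.sum_congr rfl (fun i _ => hcs i), hlast, Finset.sum_const]
  simp only [Finset.card_univ, Fintype.card_fin, smul_eq_mul]
  omega

lemma dissNum_eq (hk4 : 4 ≤ k) (hkm : k = 3*m+1) :
    dissNumOn (SimpleGraph.cycleGraph k) Set.univ = 2 * m := by
  have hempty : (0 : ℕ) ∈ {n | ∃ s : Finset (Fin k),
      ↑s ⊆ (Set.univ : Set (Fin k)) ∧ IsDissoc (SimpleGraph.cycleGraph k) s ∧ s.card = n} := by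
    refine ⟨∅, by simp, ?_, by simp⟩
    intro v hv
    simp at hv
  have hbdd : ∀ n ∈ {n | ∃ s : Finset (Fin k),
      ↑s ⊆ (Set.univ : Set (Fin k)) ∧ IsDissoc (SimpleGraph.cycleGraph k) s ∧ s.card = n},
      n ≤ 2 * m := by
    rintro n ⟨s, -, hdis, rfl⟩
    have := card_le_of_dissoc hk4 hdis
    omega
  apply le_antisymm
  · exact csSup_le ⟨0, hempty⟩ hbdd
  · apply le_csSup
    · exact ⟨2 * m, hbdd⟩
    · exact ⟨(Tset m (0 : Fin k) (dzero m))ᶜ, Set.subset_univ _,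
        compl_Tset_dissoc hk4 (dzero_sum hkm), compl_Tset_card hkm (dzero_sum hkm)⟩

lemma maxDissoc_iff (hk4 : 4 ≤ k) (hkm : k = 3*m+1) (s : Finset (Fin k)) :
    IsMaxDissocOn (SimpleGraph.cycleGraph k) Set.univ s ↔
      IsDissoc (SimpleGraph.cycleGraph k) s ∧ s.card = 2 * m := by
  rw [IsMaxDissocOn, dissNum_eq hk4 hkm]
  constructor
  · rintro ⟨-, h1, h2⟩; exact ⟨h1, h2⟩
  · rintro ⟨h1, h2⟩; exact ⟨Set.subset_univ _, h1, h2⟩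

noncomputable def Theta (hk4 : 4 ≤ k) (hkm : k = 3*m+1) (a : Fin k) :
    Comps (m+1) k ≃
      {s : Finset (Fin k) // IsMaxDissocOn (SimpleGraph.cycleGraph k) Set.univ s ∧ a ∉ s} :=
  Equiv.ofBijective
    (fun d => ⟨(Tset m a d.1)ᶜ,
      (maxDissoc_iff hk4 hkm _).2 ⟨compl_Tset_dissoc hk4 d.2, compl_Tset_card hkm d.2⟩,
      fun h => (Finset.mem_compl.1 h) (a_mem_Tset a d.1)⟩)
    (by
      constructor
      · rintro ⟨d, hd⟩ ⟨d', hd'⟩ h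
        have h1 : (Tset m a d)ᶜ = (Tset m a d')ᶜ := congrArg Subtype.val h
        have h2 : Tset m a d = Tset m a d' := by
          have := congrArg (·ᶜ) h1
          simpa using this
        exact Subtype.ext (Tset_inj hd hd' h2)
      · rintro ⟨s, hmax, ha⟩
        obtain ⟨hdis, hcard⟩ := (maxDissoc_iff hk4 hkm s).1 hmax
        rw [dissoc_iff_windows hk4] at hdis
        obtain ⟨d, hsum, hTd⟩ := Tset_surj hk4 hkm hdis hcard ha
        refine ⟨⟨d, hsum⟩, ?_⟩
        apply Subtype.ext
        show (Tset m a d)ᶜ = s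
        rw [hTd, compl_compl])

lemma Theta_val (hk4 : 4 ≤ k) (hkm : k = 3*m+1) (a : Fin k) (d : Comps (m+1) k) :
    (Theta hk4 hkm a d).1 = (Tset m a d.1)ᶜ := rfl

end Main

section Count
variable {m k : ℕ} [NeZero k]

lemma count_away (hk4 : 4 ≤ k) (hkm : k = 3*m+1) (u : Fin k) :
    Nat.card {s : Finset (Fin k) //
        IsMaxDissocOn (SimpleGraph.cycleGraph k) Set.univ s ∧ u ∉ s}
      = Ncomp (m+1) k :=
  (Nat.card_congr (Theta hk4 hkm u)).symm

lemma count_filtered (hk4 : 4 ≤ k) (hkm : k = 3*m+1) (a : Fin k) (c : Fin 3)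
    (R : Finset (Fin k) → Prop)
    (hR : ∀ d : Comps (m+1) k, R ((Tset m a d.1)ᶜ) ↔ d.1 (Fin.last m) = c) :
    Nat.card {s : Finset (Fin k) //
        (IsMaxDissocOn (SimpleGraph.cycleGraph k) Set.univ s ∧ a ∉ s) ∧ R s}
      = Ncomp m (k - ((c : ℕ) + 1)) := by
  have hc : (c : ℕ) + 1 ≤ k := by have := c.isLt; omega
  have e1 := (Equiv.subtypeSubtypeEquivSubtypeInter
    (fun s : Finset (Fin k) =>
      IsMaxDissocOn (SimpleGraph.cycleGraph k) Set.univ s ∧ a ∉ s) R).symm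
  have e2 := (Equiv.subtypeEquiv (Theta hk4 hkm a)
    (p := fun d : Comps (m+1) k => R ((Theta hk4 hkm a d).1))
    (q := fun x : {s : Finset (Fin k) //
        IsMaxDissocOn (SimpleGraph.cycleGraph k) Set.univ s ∧ a ∉ s} => R x.1)
    (fun _ => Iff.rfl)).symm
  have e3 := Equiv.subtypeEquivRight (fun d : Comps (m+1) k => hR d)
  have e4 := compsLast m k c hc
  calc Nat.card {s : Finset (Fin k) //
        (IsMaxDissocOn (SimpleGraph.cycleGraph k) Set.univ s ∧ a ∉ s) ∧ R s}
      = Nat.card {x : {s : Finset (Fin k) //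
          IsMaxDissocOn (SimpleGraph.cycleGraph k) Set.univ s ∧ a ∉ s} // R x.1} :=
        Nat.card_congr e1
    _ = Nat.card {d : Comps (m+1) k // R ((Theta hk4 hkm a d).1)} :=
        Nat.card_congr e2
    _ = Nat.card {d : Comps (m+1) k // d.1 (Fin.last m) = c} :=
        Nat.card_congr e3
    _ = Nat.card (Comps m (k - ((c : ℕ) + 1))) := Nat.card_congr e4
    _ = Ncomp m (k - ((c : ℕ) + 1)) := rfl

lemma hR_deg0 (hk4 : 4 ≤ k) (a : Fin k) (d : Comps (m+1) k) :
    (a - 1 ∈ (Tset m a d.1)ᶜ ∧ a - 2 ∉ (Tset m a d.1)ᶜ) ↔ d.1 (Fin.last m) = (1 : Fin 3) := by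
  rw [Finset.mem_compl, Finset.notMem_compl]
  rw [show (d.1 (Fin.last m) = (1 : Fin 3)) ↔ ((d.1 (Fin.last m) : ℕ) = 1) from
    by rw [Fin.ext_iff]; rfl]
  exact lastPart₁ hk4 d.2

lemma hR_deg1 (hk4 : 4 ≤ k) (a : Fin k) (d : Comps (m+1) k) :
    (a - 1 ∈ (Tset m a d.1)ᶜ ∧ a - 2 ∈ (Tset m a d.1)ᶜ) ↔ d.1 (Fin.last m) = (2 : Fin 3) := by
  rw [Finset.mem_compl, Finset.mem_compl]
  rw [show (d.1 (Fin.last m) = (2 : Fin 3)) ↔ ((d.1 (Fin.last m) : ℕ) = 2) from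
    by rw [Fin.ext_iff]; rfl]
  exact lastPart₂ hk4 d.2

lemma deg0_pred (hk4 : 4 ≤ k) (u : Fin k) (s : Finset (Fin k)) :
    (IsMaxDissocOn (SimpleGraph.cycleGraph k) Set.univ s ∧ u ∈ s ∧
        nbrCount (SimpleGraph.cycleGraph k) s u = 0)
      ↔ ((IsMaxDissocOn (SimpleGraph.cycleGraph k) Set.univ s ∧ (u + 1) ∉ s) ∧
          ((u + 1) - 1 ∈ s ∧ (u + 1) - 2 ∉ s)) := by
  have e1 : (u + 1) - 1 = u := by ring
  have e2 : (u + 1) - 2 = u - 1 := by ring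
  rw [e1, e2, nbrCount_cyc hk4]
  constructor
  · rintro ⟨hmax, hu, hn⟩
    have h1 : u - 1 ∉ s := by intro h; rw [if_pos h] at hn; omega
    have h2 : u + 1 ∉ s := by intro h; rw [if_pos h] at hn; omega
    exact ⟨⟨hmax, h2⟩, hu, h1⟩
  · rintro ⟨⟨hmax, h2⟩, hu, h1⟩
    exact ⟨hmax, hu, by rw [if_neg h1, if_neg h2]⟩

lemma deg1_pred (hk4 : 4 ≤ k) (hkm : k = 3*m+1) (u : Fin k) (s : Finset (Fin k)) :
    (IsMaxDissocOn (SimpleGraph.cycleGraph k) Set.univ s ∧ u ∈ s ∧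
        nbrCount (SimpleGraph.cycleGraph k) s u = 1)
      ↔ (((IsMaxDissocOn (SimpleGraph.cycleGraph k) Set.univ s ∧ (u + 2) ∉ s) ∧
            ((u + 2) - 1 ∈ s ∧ (u + 2) - 2 ∈ s)) ∨
          ((IsMaxDissocOn (SimpleGraph.cycleGraph k) Set.univ s ∧ (u + 1) ∉ s) ∧
            ((u + 1) - 1 ∈ s ∧ (u + 1) - 2 ∈ s))) := by
  have e1 : (u + 2) - 1 = u + 1 := by ring
  have e2 : (u + 2) - 2 = u := by ring
  have e3 : (u + 1) - 1 = u := by ring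
  have e4 : (u + 1) - 2 = u - 1 := by ring
  rw [e1, e2, e3, e4, nbrCount_cyc hk4]
  constructor
  · rintro ⟨hmax, hu, hn⟩
    have hwin := (dissoc_iff_windows hk4 s).1 ((maxDissoc_iff hk4 hkm s).1 hmax).1
    by_cases h1 : u + 1 ∈ s
    · left
      have hu2 : u + 2 ∉ s := by
        intro h
        exact hwin u ⟨hu, h1, h⟩
      exact ⟨⟨hmax, hu2⟩, h1, hu⟩
    · right
      have hm1 : u - 1 ∈ s := by
        by_contra h
        rw [if_neg h, if_neg h1] at hn
        omega
      exact ⟨⟨hmax, h1⟩, hu, hm1⟩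
  · rintro (⟨⟨hmax, hu2⟩, h1, hu⟩ | ⟨⟨hmax, h1⟩, hu, hm1⟩)
    · have hwin := (dissoc_iff_windows hk4 s).1 ((maxDissoc_iff hk4 hkm s).1 hmax).1
      have hm1 : u - 1 ∉ s := by
        intro h
        refine hwin (u - 1) ⟨h, ?_, ?_⟩
        · rw [show u - 1 + 1 = u by ring]; exact hu
        · rw [show u - 1 + 2 = u + 1 by ring]; exact h1
      exact ⟨hmax, hu, by rw [if_neg hm1, if_pos h1]⟩
    · exact ⟨hmax, hu, by rw [if_pos hm1, if_neg h1]⟩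

lemma count_deg0 (hk4 : 4 ≤ k) (hkm : k = 3*m+1) (u : Fin k) :
    Nat.card {s : Finset (Fin k) //
        IsMaxDissocOn (SimpleGraph.cycleGraph k) Set.univ s ∧ u ∈ s ∧
          nbrCount (SimpleGraph.cycleGraph k) s u = 0}
      = Ncomp m (k - 2) := by
  rw [Nat.card_congr (Equiv.subtypeEquivRight (fun s => deg0_pred hk4 u s))]
  have := count_filtered hk4 hkm (u + 1) 1
    (fun s => (u + 1) - 1 ∈ s ∧ (u + 1) - 2 ∉ s)
    (fun d => hR_deg0 hk4 (u + 1) d)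
  simpa using this

lemma count_deg1 (hk4 : 4 ≤ k) (hkm : k = 3*m+1) (u : Fin k) :
    Nat.card {s : Finset (Fin k) //
        IsMaxDissocOn (SimpleGraph.cycleGraph k) Set.univ s ∧ u ∈ s ∧
          nbrCount (SimpleGraph.cycleGraph k) s u = 1}
      = Ncomp m (k - 3) + Ncomp m (k - 3) := by
  rw [Nat.card_congr (Equiv.subtypeEquivRight (fun s => deg1_pred hk4 hkm u s))]
  have hdisj : Disjoint
      (fun s : Finset (Fin k) =>
        (IsMaxDissocOn (SimpleGraph.cycleGraph k) Set.univ s ∧ (u + 2) ∉ s) ∧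
          ((u + 2) - 1 ∈ s ∧ (u + 2) - 2 ∈ s))
      (fun s : Finset (Fin k) =>
        (IsMaxDissocOn (SimpleGraph.cycleGraph k) Set.univ s ∧ (u + 1) ∉ s) ∧
          ((u + 1) - 1 ∈ s ∧ (u + 1) - 2 ∈ s)) := by
    rw [Pi.disjoint_iff]
    intro s
    rw [Prop.disjoint_iff]
    rintro ⟨⟨-, ⟨h1, -⟩⟩, ⟨⟨-, h2⟩, -⟩⟩
    rw [show (u + 2) - 1 = u + 1 by ring] at h1
    exact h2 h1
  rw [Nat.card_congr (subtypeOrEquiv _ _ hdisj), Nat.card_sum]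
  have hA := count_filtered hk4 hkm (u + 2) 2
    (fun s => (u + 2) - 1 ∈ s ∧ (u + 2) - 2 ∈ s)
    (fun d => hR_deg1 hk4 (u + 2) d)
  have hB := count_filtered hk4 hkm (u + 1) 2
    (fun s => (u + 1) - 1 ∈ s ∧ (u + 1) - 2 ∈ s)
    (fun d => hR_deg1 hk4 (u + 1) d)
  simp only [show ((2 : Fin 3) : ℕ) = 2 from rfl] at hA hB
  rw [hA, hB]

end Count

theorem cycleGraph_counts_mod3_eq_1 (k : ℕ) (hk : 4 ≤ k) (hmod : k % 3 = 1) (u : Fin k) :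
    numMaxDissocAway (SimpleGraph.cycleGraph k) u = (k + 2) * (k + 5) / 18 ∧
    numMaxDissocDeg1 (SimpleGraph.cycleGraph k) u = (k - 1) * (k + 2) / 9 ∧
    numMaxDissocDeg0 (SimpleGraph.cycleGraph k) u = (k - 1) / 3 := by
  haveI : NeZero k := ⟨by omega⟩
  obtain ⟨m, hkm⟩ : ∃ m, k = 3 * m + 1 := ⟨(k - 1) / 3, by omega⟩
  have hm1 : 1 ≤ m := by omega
  obtain ⟨m', hm'⟩ : ∃ m', m = m' + 1 := ⟨m - 1, by omega⟩
  refine ⟨?_, ?_, ?_⟩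
  · -- away
    show numMaxDissocOnAway (SimpleGraph.cycleGraph k) Set.univ u = (k + 2) * (k + 5) / 18
    rw [numMaxDissocOnAway, count_away hk hkm u]
    have hN := Ncomp_sub_two m
    have h18 : (k + 2) * (k + 5) = 18 * Ncomp (m+1) k := by
      rw [hkm]
      calc (3*m+1 + 2) * (3*m+1 + 5) = 9 * ((m+1) * (m+2)) := by ring
        _ = 9 * (2 * Ncomp (m+1) (3*m+1)) := by rw [hN]
        _ = 18 * Ncomp (m+1) (3*m+1) := by ring
    rw [h18, Nat.mul_div_cancel_left _ (by norm_num : 0 < 18)]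
  · -- deg 1
    show numMaxDissocOnDeg1 (SimpleGraph.cycleGraph k) Set.univ u = (k - 1) * (k + 2) / 9
    rw [numMaxDissocOnDeg1, count_deg1 hk hkm u]
    have hk3 : k - 3 = 3 * m' + 1 := by omega
    rw [hk3, hm']
    have hN := Ncomp_sub_two m'
    have h9 : (k - 1) * (k + 2) = 9 * (Ncomp (m'+1) (3*m'+1) + Ncomp (m'+1) (3*m'+1)) := by
      have hk1 : k - 1 = 3 * m := by omega
      rw [hk1, hkm, hm']
      calc (3*(m'+1)) * (3*(m'+1)+1 + 2) = 9 * ((m'+1) * (m'+2)) := by ring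
        _ = 9 * (2 * Ncomp (m'+1) (3*m'+1)) := by rw [hN]
        _ = 9 * (Ncomp (m'+1) (3*m'+1) + Ncomp (m'+1) (3*m'+1)) := by ring
    rw [h9, Nat.mul_div_cancel_left _ (by norm_num : 0 < 9)]
  · -- deg 0
    show numMaxDissocOnDeg0 (SimpleGraph.cycleGraph k) Set.univ u = (k - 1) / 3
    rw [numMaxDissocOnDeg0, count_deg0 hk hkm u]
    have hk2 : k - 2 = 3 * m' + 2 := by omega
    rw [hk2, hm', Ncomp_sub_one m']
    omega
end
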